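/- arXiv:2312.12839 — 9 statements merged into one kernel-verified Lean document; each statement's English description precedes it below -/
import Mathlib

section
/- Let M be a finite set and let 𝒫 be the set of all partial orders on M (viewed as subsets of M × M that are reflexive, antisymmetric, and transitive). The map γ : 2^𝒫 → 2^𝒫 defined by γ(P) = {p ∈ 𝒫 | ⋂_{p̃∈P} p̃ ⊆ p ⊆ ⋃_{p̃∈P} p̃} is a closure operator, i.e., γ is extensive (P ⊆ γ(P) for nonempty P), isotone (P ⊆ Q implies γ(P) ⊆ γ(Q)), and idempotent (γ(γ(P)) = γ(P)). -/
open scoped Classical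

variable {M : Type*}

/-- `p ⊆ M × M` is a partial order: reflexive, antisymmetric, transitive. -/
def IsPO (p : Set (M × M)) : Prop :=
  (∀ x : M, (x, x) ∈ p) ∧ (∀ x y : M, (x, y) ∈ p → (y, x) ∈ p → x = y) ∧
  (∀ x y z : M, (x, y) ∈ p → (y, z) ∈ p → (x, z) ∈ p)

/-- The set 𝒫 of all partial orders on `M`. -/
def Posets (M : Type*) : Set (Set (M × M)) := {p | IsPO p}

/-- The closure operator γ(P) = {p ∈ 𝒫 | ⋂P ⊆ p ⊆ ⋃P}. -/
def gam (P : Set (Set (M × M))) : Set (Set (M × M)) :=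
  {q | q ∈ Posets M ∧ (⋂ p ∈ P, p) ⊆ q ∧ q ⊆ ⋃ p ∈ P, p}

/-- `S` is union-free generic: (C1) `S ⊊ γ(S)` and (C2) no family of proper
subsets of `S` has closures whose union is `γ(S)`. -/
def IsUfg (S : Set (Set (M × M))) : Prop :=
  S ⊆ Posets M ∧ S ⊂ gam S ∧
    ¬ ∃ (ℓ : ℕ) (A : Fin ℓ → Set (Set (M × M))),
        (∀ i, A i ⊂ S) ∧ (⋃ i, gam (A i)) = gam S

theorem stmt0 {M : Type*} [Fintype M] :
    (∀ P : Set (Set (M × M)), P.Nonempty → P ⊆ Posets M → P ⊆ gam P) ∧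
    (∀ P Q : Set (Set (M × M)), P ⊆ Q → gam P ⊆ gam Q) ∧
    (∀ P : Set (Set (M × M)), gam (gam P) = gam P) := by
  refine ⟨?_, ?_, ?_⟩
  · intro P _ hP p hp
    exact ⟨hP hp, Set.biInter_subset_of_mem hp, Set.subset_biUnion_of_mem (u := id) hp⟩
  · intro P Q hPQ q hq
    exact ⟨hq.1, (Set.biInter_mono hPQ (fun _ _ => le_rfl)).trans hq.2.1,
      hq.2.2.trans (Set.biUnion_mono hPQ (fun _ _ => le_rfl))⟩
  · intro P
    ext q
    constructor
    · rintro ⟨hq, h1, h2⟩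
      refine ⟨hq, ?_, ?_⟩
      · refine le_trans ?_ h1
        exact Set.subset_iInter₂ (fun r hr => hr.2.1)
      · refine h2.trans ?_
        exact Set.iUnion₂_subset (fun r hr => hr.2.2)
    · intro hq
      exact ⟨hq.1, Set.biInter_subset_of_mem hq, Set.subset_biUnion_of_mem (u := id) hq⟩
end

section
/- Let M be a finite set, 𝒫 the set of partial orders on M, and γ the closure operator γ(P) = {p ∈ 𝒫 | ⋂P ⊆ p ⊆ ⋃P}. Define S ⊆ 𝒫 to be union-free generic (S ∈ 𝒮) if (C1) S ⊊ γ(S) and (C2) there is no family (A_i)_{i=1,…,ℓ} of proper subsets A_i ⊊ S with ⋃_i γ(A_i) = γ(S). Then S ∈ 𝒮 if and only if there exists a partial order q ∈ γ(S) \ S such that for every p ∈ S, q ∉ γ(S \ {p}). -/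
open scoped Classical

variable {M : Type*}

lemma gam_mono {A B : Set (Set (M × M))} (h : A ⊆ B) : gam A ⊆ gam B := by
  rintro q ⟨hq, h1, h2⟩
  refine ⟨hq, fun x hx => h1 ?_, fun x hx => ?_⟩
  · simp only [Set.mem_iInter] at hx ⊢
    exact fun p hp => hx p (h hp)
  · obtain ⟨p, hp, hxp⟩ := Set.mem_iUnion₂.1 (h2 hx)
    exact Set.mem_iUnion₂.2 ⟨p, h hp, hxp⟩

lemma mem_gam_self {S : Set (Set (M × M))} (hS : S ⊆ Posets M) {s : Set (M × M)}
    (hs : s ∈ S) : s ∈ gam S :=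
  ⟨hS hs, fun x hx => Set.mem_iInter₂.1 hx s hs, fun x hx => Set.mem_iUnion₂.2 ⟨s, hs, hx⟩⟩

lemma gam_singleton {s : Set (M × M)} (hs : s ∈ Posets M) : gam {s} = {s} := by
  apply Set.Subset.antisymm
  · rintro q ⟨hq, h1, h2⟩
    have h1' : s ⊆ q := by simpa using h1
    have h2' : q ⊆ s := by simpa using h2
    exact Set.Subset.antisymm h2' h1'
  · rintro q rfl
    exact mem_gam_self (by simpa using hs) rfl

theorem stmt3 {M : Type*} [Fintype M] (S : Set (Set (M × M))) (hS : S ⊆ Posets M) :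
    IsUfg S ↔ ∃ q ∈ gam S \ S, ∀ p ∈ S, q ∉ gam (S \ {p}) := by
  constructor
  · rintro ⟨_, hC1, hC2⟩
    by_contra hno
    push_neg at hno
    have hfin : Finite S := Set.toFinite S
    obtain ⟨n, ⟨e⟩⟩ := Finite.exists_equiv_fin S
    apply hC2
    refine ⟨n, fun i => S \ {(e.symm i : Set (M × M))}, fun i => ?_, ?_⟩
    · exact ⟨Set.diff_subset, fun hsub => (hsub (e.symm i).2).2 rfl⟩
    · apply Set.Subset.antisymm
      · exact Set.iUnion_subset fun i => gam_mono Set.diff_subset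
      · intro q hq
        by_cases hqS : q ∈ S
        · obtain ⟨p, hpS, hpq⟩ : ∃ p ∈ S, p ≠ q := by
            by_contra hc
            push_neg at hc
            have hSeq : S = {q} := Set.Subset.antisymm (fun x hx => hc x hx) (by simpa using hqS)
            have hgs : gam S = S := by rw [hSeq, gam_singleton (hS hqS)]
            exact hC1.2 hgs.subset
          refine Set.mem_iUnion.2 ⟨e ⟨p, hpS⟩, ?_⟩
          show q ∈ gam (S \ {(e.symm (e ⟨p, hpS⟩) : Set (M × M))})
          have he : (e.symm (e ⟨p, hpS⟩) : Set (M × M)) = p := by simp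
          rw [he]
          exact mem_gam_self (fun x hx => hS hx.1) ⟨hqS, fun h => hpq (by simpa using h.symm)⟩
        · obtain ⟨p, hpS, hqp⟩ := hno q ⟨hq, hqS⟩
          refine Set.mem_iUnion.2 ⟨e ⟨p, hpS⟩, ?_⟩
          show q ∈ gam (S \ {(e.symm (e ⟨p, hpS⟩) : Set (M × M))})
          have he : (e.symm (e ⟨p, hpS⟩) : Set (M × M)) = p := by simp
          rw [he]
          exact hqp
  · rintro ⟨q, ⟨hqγ, hqS⟩, hq⟩
    refine ⟨hS, ⟨fun s hs => mem_gam_self hS hs, fun hsub => hqS (hsub hqγ)⟩, ?_⟩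
    rintro ⟨ℓ, A, hA, hU⟩
    have hqU : q ∈ ⋃ i, gam (A i) := hU ▸ hqγ
    obtain ⟨i, hi⟩ := Set.mem_iUnion.1 hqU
    obtain ⟨p, hpS, hpA⟩ := Set.exists_of_ssubset (hA i)
    have hsub : A i ⊆ S \ {p} := by
      intro x hx
      refine ⟨(hA i).1 hx, ?_⟩
      intro hxe
      rw [Set.mem_singleton_iff] at hxe
      subst hxe
      exact hpA hx
    exact hq p hpS (gam_mono hsub hi)
end

section
/- Let M be a finite set and 𝒮 the family of union-free generic sets of partial orders on M. Then for every S ∈ 𝒮, the cardinality of S is at most the Vapnik–Chervonenkis dimension of the closure system γ(2^𝒫), i.e., the largest cardinality of a set A ⊆ 𝒫 that can be shattered by {γ(B) | B ⊆ 𝒫}. -/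
open scoped Classical

variable {M : Type*}

/-- `A` is shattered by the family `C`. -/
def ShattersSet {α : Type*} (C : Set (Set α)) (A : Set α) : Prop :=
  ∀ B ⊆ A, ∃ c ∈ C, A ∩ c = B

/-- A ufg set is shattered by the closures: for `B ⊆ S` the trace of `γ(B)` on `S` is `B`. -/
lemma ufg_trace {M : Type*} (S : Set (Set (M × M))) (hS : IsUfg S)
    (B : Set (Set (M × M))) (hB : B ⊆ S) : S ∩ gam B = B := by
  apply Set.Subset.antisymm
  · -- if s ∈ S ∩ γ(B) but s ∉ B, then γ(S \ {s}) = γ(S), contradicting (C2)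
    rintro s ⟨hsS, hsgB⟩
    by_contra hsB
    have hBs : B ⊆ S \ {s} := fun b hb => ⟨hB hb, fun h => hsB (h ▸ hb)⟩
    -- intersections agree
    have hIs : (⋂ p ∈ S \ {s}, p) ⊆ s := by
      refine subset_trans ?_ hsgB.2.1
      exact Set.biInter_mono hBs (fun _ _ => subset_rfl)
    have hI : (⋂ p ∈ S \ {s}, p) = ⋂ p ∈ S, p := by
      apply Set.Subset.antisymm
      · intro x hx
        simp only [Set.mem_iInter] at hx ⊢
        intro p hp
        by_cases hps : p = s
        · exact hps ▸ hIs (by simp only [Set.mem_iInter]; exact hx)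
        · exact hx p ⟨hp, hps⟩
      · exact Set.biInter_mono Set.diff_subset (fun _ _ => subset_rfl)
    have hUs : s ⊆ ⋃ p ∈ S \ {s}, p := by
      refine subset_trans hsgB.2.2 ?_
      exact Set.biUnion_mono hBs (fun _ _ => subset_rfl)
    have hU : (⋃ p ∈ S \ {s}, p) = ⋃ p ∈ S, p := by
      apply Set.Subset.antisymm
      · exact Set.biUnion_mono Set.diff_subset (fun _ _ => subset_rfl)
      · intro x hx
        simp only [Set.mem_iUnion] at hx
        obtain ⟨p, hp, hxp⟩ := hx
        by_cases hps : p = s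
        · exact hUs (hps ▸ hxp)
        · exact Set.mem_biUnion ⟨hp, hps⟩ hxp
    have hgam : gam (S \ {s}) = gam S := by
      unfold gam; rw [hI, hU]
    refine hS.2.2 ⟨1, fun _ => S \ {s}, fun _ => ?_, by simp [hgam, Set.iUnion_const]⟩
    refine Set.ssubset_iff_subset_ne.mpr ⟨Set.diff_subset, fun h => ?_⟩
    simp only [] at h
    rw [← h] at hsS
    exact hsS.2 rfl
  · intro b hb
    refine ⟨hB hb, hS.1 (hB hb), ?_, ?_⟩
    · exact Set.biInter_subset_of_mem hb
    · exact fun x hx => Set.mem_biUnion hb hx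

theorem stmt8 {M : Type*} [Fintype M] (S : Set (Set (M × M))) (hS : IsUfg S) :
    S.ncard ≤ sSup {n : ℕ | ∃ A : Set (Set (M × M)),
      ShattersSet {C | ∃ B : Set (Set (M × M)), gam B = C} A ∧ A.ncard = n} := by
  apply le_csSup
  · -- bounded above by the (finite) number of subsets of M × M
    refine ⟨Nat.card (Set (M × M)), ?_⟩
    rintro n ⟨A, _, rfl⟩
    calc A.ncard ≤ (Set.univ : Set (Set (M × M))).ncard :=
          Set.ncard_le_ncard (Set.subset_univ A) Set.finite_univ
      _ = Nat.card (Set (M × M)) := Set.ncard_univ _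
  · exact ⟨S, fun B hB => ⟨gam B, ⟨B, rfl⟩, ufg_trace S hS B hB⟩, rfl⟩
end

section
/- Let M = {x₁, …, x_m} be a finite set with m ≥ 3. For each pair i < j let p_{ij} be the partial order on M whose only nonreflexive pair is (x_i, x_j), i.e., p_{ij} = {(x, x) | x ∈ M} ∪ {(x_i, x_j)}. Then the set S := {p_{ij} | 1 ≤ i < j ≤ m}, which has cardinality m(m−1)/2, is union-free generic; in particular, the bound |S| ≤ m(m−1)/2 for union-free generic sets is tight. -/
open scoped Classical

variable {M : Type*}

section aux

variable (m : ℕ) (x : Fin m ≃ M)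

private lemma po_aux {i j : Fin m} (hij : i < j) :
    IsPO ({z : M × M | z.1 = z.2} ∪ {(x i, x j)} : Set (M × M)) := by
  have hne : x i ≠ x j := fun h => hij.ne (x.injective h)
  refine ⟨fun a => Or.inl rfl, ?_, ?_⟩
  · intro a b h1 h2
    rcases h1 with h1 | h1
    · exact h1
    · rcases h2 with h2 | h2
      · exact h2.symm
      · simp only [Set.mem_singleton_iff, Prod.mk.injEq] at h1 h2
        exact absurd (h1.1.symm.trans h2.2) hne
  · intro a b c h1 h2
    rcases h1 with h1 | h1
    · simp only [Set.mem_setOf_eq] at h1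
      subst h1; exact h2
    · simp only [Set.mem_singleton_iff, Prod.mk.injEq] at h1
      obtain ⟨rfl, rfl⟩ := h1
      rcases h2 with h2 | h2
      · simp only [Set.mem_setOf_eq] at h2
        exact Or.inr (Set.mem_singleton_iff.2 (Prod.ext rfl h2.symm))
      · simp only [Set.mem_singleton_iff, Prod.mk.injEq] at h2
        exact absurd h2.1 hne.symm

end aux

theorem stmt10 {M : Type*} [Fintype M] (m : ℕ) (hm : 3 ≤ m) (x : Fin m ≃ M) :
    IsUfg {p : Set (M × M) | ∃ i j : Fin m, i < j ∧
        p = {z : M × M | z.1 = z.2} ∪ {(x i, x j)}} ∧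
    Set.ncard {p : Set (M × M) | ∃ i j : Fin m, i < j ∧
        p = {z : M × M | z.1 = z.2} ∪ {(x i, x j)}} = m * (m - 1) / 2 := by
  set D : Set (M × M) := {z : M × M | z.1 = z.2} with hD
  set S : Set (Set (M × M)) := {p : Set (M × M) | ∃ i j : Fin m, i < j ∧
        p = D ∪ {(x i, x j)}} with hS
  have hxne : ∀ {i j : Fin m}, i ≠ j → x i ≠ x j := fun h hx => h (x.injective hx)
  have h01 : (⟨0, by omega⟩ : Fin m) < ⟨1, by omega⟩ := by simp [Fin.lt_def]
  have h02 : (⟨0, by omega⟩ : Fin m) < ⟨2, by omega⟩ := by simp [Fin.lt_def]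
  have hSP : S ⊆ Posets M := by
    rintro p ⟨i, j, hij, rfl⟩; exact po_aux m x hij
  have hinter : (⋂ p ∈ S, p) = D := by
    apply subset_antisymm
    · intro z hz
      simp only [Set.mem_iInter] at hz
      have hz1 := hz _ ⟨_, _, h01, rfl⟩
      have hz2 := hz _ ⟨_, _, h02, rfl⟩
      rcases hz1 with h | h
      · exact h
      · rcases hz2 with h' | h'
        · exact h'
        · simp only [Set.mem_singleton_iff] at h h'
          exfalso
          have h2 : x (⟨1, by omega⟩ : Fin m) = x ⟨2, by omega⟩ :=
            (Prod.ext_iff.1 (h.symm.trans h')).2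
          exact hxne (by simp [Fin.ext_iff]) h2
    · intro z hz
      simp only [Set.mem_iInter]
      rintro p ⟨i, j, hij, rfl⟩
      exact Or.inl hz
  have hDpo : IsPO D := ⟨fun a => rfl, fun a b h1 h2 => h1, fun a b c h1 h2 => h1.trans h2⟩
  have hDnotS : D ∉ S := by
    rintro ⟨i, j, hij, hEq⟩
    have : ((x i, x j) : M × M) ∈ D := hEq ▸ Or.inr rfl
    exact hxne hij.ne this
  have hSsub : S ⊆ gam S := by
    intro p hp
    refine ⟨hSP hp, ?_, fun z hz => Set.mem_biUnion hp hz⟩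
    rw [hinter]
    obtain ⟨i, j, hij, rfl⟩ := hp
    exact Set.subset_union_left
  constructor
  · refine ⟨hSP, ⟨hSsub, fun hcon => ?_⟩, ?_⟩
    · apply hDnotS
      apply hcon
      exact ⟨hDpo, by rw [hinter],
        fun z hz => Set.mem_biUnion (⟨_, _, h01, rfl⟩ : _ ∈ S) (Or.inl hz)⟩
    · rintro ⟨ℓ, A, hA, hU⟩
      set P : Set (M × M) := D ∪ {z : M × M | ∃ i j : Fin m, i < j ∧ z = (x i, x j)}
        with hP
      have hPpo : IsPO P := by
        refine ⟨fun a => Or.inl rfl, ?_, ?_⟩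
        · intro a b h1 h2
          rcases h1 with h1 | ⟨i, j, hij, h1⟩
          · exact h1
          · obtain ⟨rfl, rfl⟩ := Prod.ext_iff.1 h1
            rcases h2 with h2 | ⟨k, l, hkl, h2⟩
            · exact h2.symm
            · obtain ⟨h3, h4⟩ := Prod.ext_iff.1 h2
              have e1 : j = k := x.injective h3
              have e2 : i = l := x.injective h4
              exact absurd (e1 ▸ e2 ▸ hkl) (not_lt.2 hij.le)
        · intro a b c h1 h2
          rcases h1 with h1 | ⟨i, j, hij, h1⟩
          · have h1' : a = b := h1
            subst h1'; exact h2
          · obtain ⟨rfl, rfl⟩ := Prod.ext_iff.1 h1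
            rcases h2 with h2 | ⟨k, l, hkl, h2⟩
            · have h2' : x j = c := h2
              right; exact ⟨i, j, hij, Prod.ext rfl h2'.symm⟩
            · obtain ⟨h3, h4⟩ := Prod.ext_iff.1 h2
              have e1 : j = k := x.injective h3
              right; exact ⟨i, l, hij.trans (e1 ▸ hkl), Prod.ext rfl h4⟩
      have hPgam : P ∈ gam S := by
        refine ⟨hPpo, by rw [hinter]; exact Set.subset_union_left, ?_⟩
        rintro z (hz | ⟨i, j, hij, rfl⟩)
        · exact Set.mem_biUnion (⟨_, _, h01, rfl⟩ : _ ∈ S) (Or.inl hz)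
        · exact Set.mem_biUnion (⟨i, j, hij, rfl⟩ : _ ∈ S) (Or.inr rfl)
      rw [← hU] at hPgam
      obtain ⟨t, ht⟩ := Set.mem_iUnion.1 hPgam
      obtain ⟨-, -, hsub⟩ := ht
      obtain ⟨q, hqS, hqA⟩ := Set.exists_of_ssubset (hA t)
      obtain ⟨i, j, hij, rfl⟩ := hqS
      have hmem : ((x i, x j) : M × M) ∈ P := Or.inr ⟨i, j, hij, rfl⟩
      obtain ⟨r, hrA, hr⟩ := Set.mem_iUnion₂.1 (hsub hmem)
      obtain ⟨k, l, hkl, rfl⟩ := (hA t).1 hrA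
      rcases hr with hr | hr
      · exact hxne hij.ne hr
      · simp only [Set.mem_singleton_iff, Prod.mk.injEq] at hr
        obtain ⟨h1, h2⟩ := hr
        have e1 : i = k := x.injective h1
        have e2 : j = l := x.injective h2
        apply hqA
        subst e1; subst e2
        exact hrA
  · have himg : S = (fun ij : Fin m × Fin m => D ∪ {(x ij.1, x ij.2)}) ''
        {ij : Fin m × Fin m | ij.1 < ij.2} := by
      ext p
      constructor
      · rintro ⟨i, j, hij, rfl⟩; exact ⟨(i, j), hij, rfl⟩
      · rintro ⟨⟨i, j⟩, hij, rfl⟩; exact ⟨i, j, hij, rfl⟩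
    rw [himg, Set.ncard_image_of_injOn]
    · have e : ↥{ij : Fin m × Fin m | ij.1 < ij.2} ≃ Σ j : Fin m, Fin j.val :=
        { toFun := fun p => ⟨p.1.2, ⟨p.1.1.val, p.2⟩⟩
          invFun := fun s => ⟨(⟨s.2.val, lt_trans s.2.isLt s.1.isLt⟩, s.1), s.2.isLt⟩
          left_inv := fun p => by ext <;> simp
          right_inv := fun s => by ext <;> simp }
      rw [← Nat.card_coe_set_eq, Nat.card_eq_fintype_card, Fintype.card_congr e,
        Fintype.card_sigma]
      simp only [Fintype.card_fin]
      rw [Fin.sum_univ_eq_sum_range (fun i => i) m]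
      exact Finset.sum_range_id m
    · rintro ⟨i, j⟩ hij ⟨k, l⟩ hkl h
      simp only [Set.mem_setOf_eq] at hij hkl
      have h' : D ∪ {((x i, x j) : M × M)} = D ∪ {((x k, x l) : M × M)} := h
      have hmem : ((x i, x j) : M × M) ∈ D ∪ {((x k, x l) : M × M)} := h' ▸ Or.inr rfl
      rcases hmem with hmem | hmem
      · exact absurd hmem (hxne hij.ne)
      · simp only [Set.mem_singleton_iff, Prod.mk.injEq] at hmem
        obtain ⟨h1, h2⟩ := hmem
        simp [x.injective h1, x.injective h2]
end

section
/- Let M be a finite set and let p₁, …, p_n be a sample of partial orders on M with empirical measure ν_n. Suppose the empirical ufg depth D_n is not identically zero, and suppose there is a pair (y₁, y₂) ∈ M × M such that (y₁, y₂) ∈ p_i for all i = 1, …, n. Then every partial order p on M with (y₁, y₂) ∉ p satisfies D_n(p) = 0. -/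
open scoped Classical

variable {M : Type*}

/-- The population ufg depth of `p` w.r.t. a probability mass function `ν` on posets. -/
noncomputable def popDepth (ν : Set (M × M) → ℝ) (p : Set (M × M)) : ℝ :=
  if ∀ S : Set (Set (M × M)), IsUfg S → (∏ᶠ q ∈ S, ν q) = 0 then 0
  else (∑ᶠ S ∈ {S : Set (Set (M × M)) | IsUfg S}, ∏ᶠ q ∈ S, ν q)⁻¹ *
       ∑ᶠ S ∈ {S : Set (Set (M × M)) | IsUfg S ∧ p ∈ gam S}, ∏ᶠ q ∈ S, ν q

/-- The empirical measure of a sample of posets. -/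
noncomputable def nuEmp (n : ℕ) (samp : Fin n → Set (M × M)) (q : Set (M × M)) : ℝ :=
  (Finset.univ.filter fun i => samp i = q).card / n

/-- The empirical ufg depth. -/
noncomputable def ufgDepth (n : ℕ) (samp : Fin n → Set (M × M)) (p : Set (M × M)) : ℝ :=
  popDepth (nuEmp n samp) p

theorem stmt12 {M : Type*} [Fintype M] (n : ℕ) (samp : Fin n → Set (M × M))
    (hsamp : ∀ i, samp i ∈ Posets M)
    (hnz : ¬ ∀ p : Set (M × M), ufgDepth n samp p = 0)
    (y₁ y₂ : M) (hall : ∀ i, (y₁, y₂) ∈ samp i)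
    (p : Set (M × M)) (hp : p ∈ Posets M) (hnot : (y₁, y₂) ∉ p) :
    ufgDepth n samp p = 0 := by
  have key : ∀ S ∈ {S : Set (Set (M × M)) | IsUfg S ∧ p ∈ gam S},
      (∏ᶠ q ∈ S, nuEmp n samp q) = 0 := by
    rintro S ⟨hS, hpS⟩
    by_contra h
    have hSfin : S.Finite := Set.toFinite S
    rw [← hSfin.coe_toFinset, finprod_mem_coe_finset] at h
    have hne : ∀ q ∈ S, nuEmp n samp q ≠ 0 := by
      intro q hq
      exact Finset.prod_ne_zero_iff.mp h q (hSfin.mem_toFinset.mpr hq)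
    have hmem : ∀ q ∈ S, (y₁, y₂) ∈ q := by
      intro q hq
      have := hne q hq
      unfold nuEmp at this
      by_contra hy
      rcases Finset.filter_nonempty_iff.mp (Finset.card_pos.mp (Nat.pos_of_ne_zero (by
        intro hc
        apply this
        rw [hc]
        simp))) with ⟨i, _, hi⟩
      exact hy (hi ▸ hall i)
    have : (y₁, y₂) ∈ ⋂ q ∈ S, q := Set.mem_iInter₂.mpr hmem
    exact hnot (hpS.2.1 this)
  unfold ufgDepth popDepth
  split
  · rfl
  · rw [finsum_mem_of_eqOn_zero key, mul_zero]
end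

section
/- Let M be a finite set and let p₁, …, p_n be a sample of partial orders on M with empirical measure ν_n, and suppose the empirical ufg depth D_n is not identically zero. If there is a pair (y₁, y₂) ∈ M × M with (y₁, y₂) ∉ p_i for all i, then every partial order p with (y₁, y₂) ∈ p satisfies D_n(p) = 0. -/
open scoped Classical

variable {M : Type*}

theorem stmt13 {M : Type*} [Fintype M] (n : ℕ) (samp : Fin n → Set (M × M))
    (hsamp : ∀ i, samp i ∈ Posets M)
    (hnz : ¬ ∀ p : Set (M × M), ufgDepth n samp p = 0)
    (y₁ y₂ : M) (hall : ∀ i, (y₁, y₂) ∉ samp i)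
    (p : Set (M × M)) (hp : p ∈ Posets M) (hin : (y₁, y₂) ∈ p) :
    ufgDepth n samp p = 0 := by
  unfold ufgDepth popDepth
  split
  · rfl
  · have h0 : ∑ᶠ S ∈ {S : Set (Set (M × M)) | IsUfg S ∧ p ∈ gam S},
        ∏ᶠ q ∈ S, nuEmp n samp q = 0 := by
      apply finsum_mem_of_eqOn_zero
      rintro S ⟨hufg, hpg⟩
      -- p ⊆ ⋃ q ∈ S, q and (y₁,y₂) ∈ p, so some q₀ ∈ S contains (y₁,y₂)
      show ∏ᶠ q ∈ S, nuEmp n samp q = 0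
      obtain ⟨-, -, hsub⟩ := hpg
      have := hsub hin
      simp only [Set.mem_iUnion] at this
      obtain ⟨q₀, hq₀S, hq₀⟩ := this
      have hS : S.Finite := Set.toFinite S
      rw [finprod_mem_eq_finite_toFinset_prod _ hS]
      apply Finset.prod_eq_zero (i := q₀) (by simpa using hq₀S)
      have : (Finset.univ.filter fun i => samp i = q₀) = ∅ := by
        apply Finset.filter_eq_empty_iff.mpr
        intro i _ h
        exact hall i (h ▸ hq₀)
      simp [nuEmp, this]
    rw [h0, mul_zero]
end

section
/- Let M be a finite set and let p₁, …, p_n be a sample of partial orders on M such that the empirical ufg depth D_n is not identically zero. Let p_Δ = {(y, y) | y ∈ M} be the trivial partial order. Then D_n(p_Δ) = 0 if and only if there exists a pair (y₁, y₂) with y₁ ≠ y₂ such that (y₁, y₂) ∈ p_i for all i = 1, …, n. -/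
/-!
A common off-diagonal pair of all sample posets lies in `⋂ S` for every set `S` of observed
posets, so `Δ ∉ γ(S)` and every summand of the numerator of `D_n(Δ)` vanishes.

Conversely, without such a pair we exhibit a ufg set `S` of observed posets with `⋂ S ⊆ Δ`,
i.e. `Δ ∈ γ(S)`. If `Δ` is not observed, take `S` minimal among sets of observed posets with
`⋂ S ⊆ Δ`: then `Δ ∈ γ(S) \ S` lies in the closure of no proper subset, which forces (C2).
If `Δ` is observed and some observed `q` has two off-diagonal pairs `e ≠ f`, then `{Δ, q}` is ufg,
since `Δ ∪ {e}` lies strictly between `Δ` and `q`. Otherwise every observed poset is `Δ` or `Δ`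
plus one pair, and the two distinct members of an observed ufg set (one exists as `D_n ≢ 0`)
meet in `Δ`. If `|M| ≤ 1`, `Δ` is the only poset, so it lies in `γ(S) ⊋ S` for any ufg `S`.
-/

open scoped Classical

variable {M : Type*}

open Set

section Posets

lemma diagonal_subset_of_isPO {p : Set (M × M)} (hp : IsPO p) : diagonal M ⊆ p := by
  rintro ⟨x, y⟩ (rfl : x = y)
  exact hp.1 x

lemma isPO_diagonal : IsPO (diagonal M) :=
  ⟨fun _ => rfl, fun _ _ h _ => h, fun _ _ _ => Eq.trans⟩

lemma isPO_diagonal_union_singleton {z : M × M} (hz : z.1 ≠ z.2) :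
    IsPO (diagonal M ∪ {z}) := by
  refine ⟨fun x => Or.inl rfl, ?_, ?_⟩
  · rintro x y (hxy | hxy) (hyx | hyx)
    · exact hxy
    · exact hxy
    · exact hyx.symm
    · subst hxy
      exact (congrArg Prod.fst (hyx : (y, x) = (x, y))).symm
  · rintro x y w (hxy | hxy) (hyw | hyw)
    · exact Or.inl (hxy.trans hyw)
    · obtain rfl : x = y := hxy
      exact Or.inr hyw
    · obtain rfl : y = w := hyw
      exact Or.inr hxy
    · subst hxy
      exact absurd (congrArg Prod.fst (hyw : (y, w) = (x, y))) hz.symm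

lemma eq_diagonal_of_isPO [Subsingleton M] {p : Set (M × M)} (hp : IsPO p) :
    p = diagonal M :=
  (diagonal_subset_of_isPO hp).antisymm' fun z _ => Subsingleton.elim z.1 z.2

lemma eq_diagonal_union_singleton {p : Set (M × M)} (hp : IsPO p) {z : M × M} (hz : z ∈ p)
    (hp₁ : ∀ e ∈ p, e.1 ≠ e.2 → e = z) : p = diagonal M ∪ {z} := by
  refine subset_antisymm (fun e he => ?_) (union_subset (diagonal_subset_of_isPO hp) ?_)
  · by_cases hee : e.1 = e.2
    · exact Or.inl hee
    · exact Or.inr (hp₁ e he hee)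
  · simpa using hz

end Posets

section Gam

lemma self_subset_gam {S : Set (Set (M × M))} (hS : S ⊆ Posets M) : S ⊆ gam S :=
  fun _ hp => ⟨hS hp, biInter_subset_of_mem hp, subset_biUnion_of_mem (u := id) hp⟩

lemma gam_empty [Nonempty M] : gam (∅ : Set (Set (M × M))) = ∅ := by
  refine eq_empty_of_forall_notMem fun q ⟨hq, _, hq₀⟩ => ?_
  obtain ⟨x⟩ := ‹Nonempty M›
  simpa using hq₀ (hq.1 x)

lemma gam_singleton_subset (p : Set (M × M)) : gam {p} ⊆ {p} := by
  rintro q ⟨_, hpq, hqp⟩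
  rw [biInter_singleton] at hpq
  rw [biUnion_singleton] at hqp
  exact hqp.antisymm hpq

lemma gam_subset_self_of_subsingleton [Nonempty M] {A : Set (Set (M × M))}
    (hA : A.Subsingleton) : gam A ⊆ A := by
  rcases hA.eq_empty_or_singleton with rfl | ⟨p, rfl⟩
  · exact gam_empty.subset
  · exact gam_singleton_subset p

lemma diagonal_mem_gam_iff {S : Set (Set (M × M))} (hS : S ⊆ Posets M) (hne : S.Nonempty) :
    diagonal M ∈ gam S ↔ (⋂ p ∈ S, p) ⊆ diagonal M := by
  refine ⟨fun h => h.2.1, fun h => ⟨isPO_diagonal, h, ?_⟩⟩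
  obtain ⟨p, hp⟩ := hne
  exact (diagonal_subset_of_isPO (hS hp)).trans (subset_biUnion_of_mem (u := id) hp)

lemma nonempty_of_iInter_subset_diagonal [Nontrivial M] {S : Set (Set (M × M))}
    (h : (⋂ p ∈ S, p) ⊆ diagonal M) : S.Nonempty := by
  obtain ⟨x, y, hxy⟩ := exists_pair_ne M
  refine nonempty_iff_ne_empty.2 fun hS => hxy ?_
  subst hS
  exact h (by simp : (x, y) ∈ ⋂ p ∈ (∅ : Set (Set (M × M))), p)

end Gam

section Ufg

lemma isUfg_of_mem_gam {S : Set (Set (M × M))} (hS : S ⊆ Posets M) {r : Set (M × M)}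
    (hr : r ∈ gam S) (hrS : r ∉ S) (hA : ∀ A ⊂ S, r ∉ gam A) : IsUfg S := by
  refine ⟨hS, (self_subset_gam hS).ssubset_of_not_subset fun h => hrS (h hr), ?_⟩
  rintro ⟨ℓ, A, hAS, hU⟩
  obtain ⟨i, hi⟩ := mem_iUnion.1 (hU ▸ hr)
  exact hA (A i) (hAS i) hi

lemma IsUfg.nontrivial [Nonempty M] {S : Set (Set (M × M))} (h : IsUfg S) : S.Nontrivial := by
  by_contra hS
  exact h.2.1.not_subset (gam_subset_self_of_subsingleton (not_nontrivial_iff.1 hS))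

lemma isUfg_pair [Nonempty M] {p q r : Set (M × M)} (hp : p ∈ Posets M) (hq : q ∈ Posets M)
    (hr : r ∈ gam {p, q}) (hrpq : r ∉ ({p, q} : Set (Set (M × M)))) : IsUfg {p, q} := by
  refine isUfg_of_mem_gam (pair_subset hp hq) hr hrpq fun A hA hrA => hrpq (hA.1 ?_)
  refine gam_subset_self_of_subsingleton (fun x hx y hy => ?_) hrA
  by_contra hxy
  refine hA.2 (pair_subset ?_ ?_) <;>
    rcases hA.1 hx with rfl | rfl <;> rcases hA.1 hy with rfl | rfl <;> simp_all

lemma isUfg_of_minimal {S : Set (Set (M × M))} (hS : S ⊆ Posets M) (hne : S.Nonempty)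
    (hΔ : diagonal M ∉ S) (hmin : Minimal (fun S => (⋂ p ∈ S, p) ⊆ diagonal M) S) :
    IsUfg S :=
  isUfg_of_mem_gam hS ((diagonal_mem_gam_iff hS hne).2 hmin.prop) hΔ fun _ hA hΔA =>
    hmin.not_prop_of_lt hA hΔA.2.1

end Ufg

section DiagonalInClosure

variable {O : Set (Set (M × M))}

lemma diagonal_mem_gam_of_subsingleton [Subsingleton M] {S : Set (Set (M × M))}
    (hS : IsUfg S) : diagonal M ∈ gam S := by
  obtain ⟨q, hq, -⟩ := exists_of_ssubset hS.2.1
  exact eq_diagonal_of_isPO hq.1 ▸ hq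

lemma exists_isUfg_of_diagonal_notMem [Finite M] [Nontrivial M] (hO : O ⊆ Posets M)
    (hΔ : diagonal M ∉ O) (hO₀ : (⋂ p ∈ O, p) ⊆ diagonal M) :
    ∃ S, IsUfg S ∧ diagonal M ∈ gam S ∧ S ⊆ O := by
  obtain ⟨S, hSO, hmin⟩ :=
    exists_minimal_le_of_wellFoundedLT (fun S => (⋂ p ∈ S, p) ⊆ diagonal M) O hO₀
  have hne := nonempty_of_iInter_subset_diagonal hmin.prop
  exact ⟨S, isUfg_of_minimal (hSO.trans hO) hne (fun h => hΔ (hSO h)) hmin,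
    (diagonal_mem_gam_iff (hSO.trans hO) hne).2 hmin.prop, hSO⟩

lemma isUfg_diagonal_pair {q : Set (M × M)} (hq : IsPO q) {e f : M × M} (he : e ∈ q)
    (hf : f ∈ q) (he₁ : e.1 ≠ e.2) (hf₁ : f.1 ≠ f.2) (hef : e ≠ f) :
    IsUfg {diagonal M, q} := by
  have : Nonempty M := ⟨e.1⟩
  refine isUfg_pair (r := diagonal M ∪ {e}) isPO_diagonal hq
    ⟨isPO_diagonal_union_singleton he₁, ?_, ?_⟩ ?_
  · rw [biInter_pair]
    exact inter_subset_left.trans subset_union_left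
  · rw [biUnion_pair]
    exact (union_subset (diagonal_subset_of_isPO hq) (singleton_subset_iff.2 he)).trans
      subset_union_right
  · rintro (h | h)
    · have he' : e ∈ diagonal M := h ▸ Or.inr rfl
      exact he₁ he'
    · have hfe : f ∈ diagonal M ∪ {e} := h ▸ hf
      rcases hfe with hfd | hfe
      · exact hf₁ hfd
      · exact hef (mem_singleton_iff.1 hfe).symm

lemma iInter_subset_diagonal_of_isUfg {S : Set (Set (M × M))} (hS : IsUfg S)
    (hS₁ : ∀ q ∈ S, ∀ e ∈ q, ∀ f ∈ q, e.1 ≠ e.2 → f.1 ≠ f.2 → e = f) :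
    (⋂ p ∈ S, p) ⊆ diagonal M := by
  intro z hz
  by_contra hz₁
  have : Nonempty M := ⟨z.1⟩
  obtain ⟨p, hp, q, hq, hpq⟩ := hS.nontrivial
  have key : ∀ s ∈ S, s = diagonal M ∪ {z} := fun s hs =>
    eq_diagonal_union_singleton (hS.1 hs) (mem_iInter₂.1 hz s hs)
      fun e he he₁ => hS₁ s hs e he z (mem_iInter₂.1 hz s hs) he₁ hz₁
  exact hpq ((key p hp).trans (key q hq).symm)

theorem exists_isUfg_diagonal_mem_gam_iff [Finite M] (hO : O ⊆ Posets M)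
    (hO₀ : ∃ S, IsUfg S ∧ S ⊆ O) :
    (∃ S, IsUfg S ∧ diagonal M ∈ gam S ∧ S ⊆ O) ↔
      ¬ ∃ y₁ y₂ : M, y₁ ≠ y₂ ∧ ∀ p ∈ O, (y₁, y₂) ∈ p := by
  refine ⟨fun ⟨S, _, hΔ, hSO⟩ ⟨y₁, y₂, hy, hy₁₂⟩ => hy (hΔ.2.1 (mem_iInter₂.2 fun p hp =>
    hy₁₂ p (hSO hp))), fun hno => ?_⟩
  obtain ⟨S₀, hS₀, hS₀O⟩ := hO₀
  rcases subsingleton_or_nontrivial M with hM | hM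
  · exact ⟨S₀, hS₀, diagonal_mem_gam_of_subsingleton hS₀, hS₀O⟩
  by_cases hΔ : diagonal M ∈ O
  swap
  · refine exists_isUfg_of_diagonal_notMem hO hΔ fun z hz => by_contra fun hz₁ => hno ?_
    exact ⟨z.1, z.2, hz₁, fun p hp => mem_iInter₂.1 hz p hp⟩
  by_cases hbig : ∃ q ∈ O, ∃ e ∈ q, ∃ f ∈ q, e.1 ≠ e.2 ∧ f.1 ≠ f.2 ∧ e ≠ f
  · obtain ⟨q, hqO, e, he, f, hf, he₁, hf₁, hef⟩ := hbig
    exact ⟨_, isUfg_diagonal_pair (hO hqO) he hf he₁ hf₁ hef,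
      self_subset_gam (pair_subset (hO hΔ) (hO hqO)) (mem_insert _ _), pair_subset hΔ hqO⟩
  · push Not at hbig
    refine ⟨S₀, hS₀, (diagonal_mem_gam_iff hS₀.1 hS₀.nontrivial.nonempty).2 ?_, hS₀O⟩
    exact iInter_subset_diagonal_of_isUfg hS₀ fun q hq => hbig q (hS₀O hq)

end DiagonalInClosure

section Depth

lemma popDepth_eq_zero_iff [Finite M] {ν : Set (M × M) → ℝ} (hν : ∀ q, 0 ≤ ν q)
    (hν₀ : ∃ S, IsUfg S ∧ (∏ᶠ q ∈ S, ν q) ≠ 0) (p : Set (M × M)) :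
    popDepth ν p = 0 ↔ ∀ S, IsUfg S → p ∈ gam S → (∏ᶠ q ∈ S, ν q) = 0 := by
  have hprod (S : Set (Set (M × M))) : 0 ≤ ∏ᶠ q ∈ S, ν q := finprod_cond_nonneg fun q _ => hν q
  obtain ⟨S₀, hS₀, hS₀ν⟩ := hν₀
  have htotal : (∑ᶠ S ∈ {S | IsUfg S}, ∏ᶠ q ∈ S, ν q) ≠ 0 := by
    rw [finsum_mem_eq_finite_toFinset_sum _ (toFinite _)]
    exact (Finset.sum_pos' (fun S _ => hprod S)
      ⟨S₀, by simpa using hS₀, (hprod S₀).lt_of_ne' hS₀ν⟩).ne'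
  rw [popDepth, if_neg fun h => hS₀ν (h S₀ hS₀), mul_eq_zero, or_iff_right (inv_ne_zero htotal),
    finsum_mem_eq_finite_toFinset_sum _ (toFinite _),
    Finset.sum_eq_zero_iff_of_nonneg fun S _ => hprod S]
  simp

variable {n : ℕ} {samp : Fin n → Set (M × M)}

lemma nuEmp_nonneg (q : Set (M × M)) : 0 ≤ nuEmp n samp q := by
  unfold nuEmp
  positivity

lemma nuEmp_ne_zero_iff {q : Set (M × M)} : nuEmp n samp q ≠ 0 ↔ q ∈ range samp := by
  simpa [nuEmp] using fun i (_ : samp i = q) => i.pos.ne'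

lemma finprod_nuEmp_ne_zero_iff [Finite M] {S : Set (Set (M × M))} :
    (∏ᶠ q ∈ S, nuEmp n samp q) ≠ 0 ↔ S ⊆ range samp := by
  rw [finprod_mem_eq_finite_toFinset_prod _ (toFinite S), Finset.prod_ne_zero_iff]
  simp [nuEmp_ne_zero_iff, subset_def]

end Depth

theorem stmt14 {M : Type*} [Fintype M] (n : ℕ) (samp : Fin n → Set (M × M))
    (hsamp : ∀ i, samp i ∈ Posets M)
    (hnz : ¬ ∀ p : Set (M × M), ufgDepth n samp p = 0) :
    ufgDepth n samp {z : M × M | z.1 = z.2} = 0 ↔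
      ∃ y₁ y₂ : M, y₁ ≠ y₂ ∧ ∀ i, (y₁, y₂) ∈ samp i := by
  obtain ⟨S₀, hS₀, hS₀ν⟩ : ∃ S, IsUfg S ∧ (∏ᶠ q ∈ S, nuEmp n samp q) ≠ 0 := by
    by_contra! h
    exact hnz fun p => if_pos h
  have key := exists_isUfg_diagonal_mem_gam_iff (range_subset_iff.2 hsamp)
    ⟨S₀, hS₀, finprod_nuEmp_ne_zero_iff.1 hS₀ν⟩
  simp only [forall_mem_range] at key
  change ufgDepth n samp (diagonal M) = 0 ↔ _
  rw [ufgDepth, popDepth_eq_zero_iff nuEmp_nonneg ⟨S₀, hS₀, hS₀ν⟩, ← not_iff_not, ← key]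
  simp only [not_forall, finprod_nuEmp_ne_zero_iff, exists_prop]
end

section
/- Let M be a finite set and 𝒫 the finite set of partial orders on M. If (ν_k) is a sequence of probability mass functions on 𝒫 converging pointwise to a probability mass function ν for which the ufg depth D(·, ν) is not identically zero, then the depth functions D(·, ν_k) converge uniformly on 𝒫 to D(·, ν). -/
open scoped Classical

variable {M : Type*}

section Aux

variable {α : Type*} [Finite α]

private lemma finsum_mem_fin (A : Set α) (f : α → ℝ) :
    ∑ᶠ i ∈ A, f i = ∑ i ∈ A.toFinite.toFinset, f i := by
  rw [← finsum_mem_coe_finset, Set.Finite.coe_toFinset]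

private lemma finprod_mem_fin (A : Set α) (f : α → ℝ) :
    ∏ᶠ i ∈ A, f i = ∏ i ∈ A.toFinite.toFinset, f i := by
  rw [← finprod_mem_coe_finset, Set.Finite.coe_toFinset]

end Aux

theorem stmt17 {M : Type*} [Fintype M] (ν : ℕ → Set (M × M) → ℝ)
    (νlim : Set (M × M) → ℝ)
    (hpos : ∀ k q, 0 ≤ ν k q) (hsupp : ∀ k q, ν k q ≠ 0 → q ∈ Posets M)
    (hsum : ∀ k, ∑ᶠ q ∈ Posets M, ν k q = 1)
    (hposl : ∀ q, 0 ≤ νlim q) (hsuppl : ∀ q, νlim q ≠ 0 → q ∈ Posets M)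
    (hsuml : ∑ᶠ q ∈ Posets M, νlim q = 1)
    (hconv : ∀ q, Filter.Tendsto (fun k => ν k q) Filter.atTop (nhds (νlim q)))
    (hnz : ¬ ∀ p : Set (M × M), popDepth νlim p = 0) :
    ∀ ε : ℝ, 0 < ε → ∃ N : ℕ, ∀ k ≥ N, ∀ p ∈ Posets M,
      |popDepth (ν k) p - popDepth νlim p| < ε := by
  -- tendsto of products over any set S
  have hprod : ∀ S : Set (Set (M × M)),
      Filter.Tendsto (fun k => ∏ᶠ q ∈ S, ν k q) Filter.atTop (nhds (∏ᶠ q ∈ S, νlim q)) := by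
    intro S
    simp only [finprod_mem_fin]
    exact tendsto_finset_prod _ fun q _ => hconv q
  -- the limit condition fails
  have hC : ¬ ∀ S : Set (Set (M × M)), IsUfg S → (∏ᶠ q ∈ S, νlim q) = 0 := by
    intro h
    exact hnz fun p => by unfold popDepth; exact if_pos h
  obtain ⟨S₀, hS₀ufg, hS₀⟩ : ∃ S, IsUfg S ∧ (∏ᶠ q ∈ S, νlim q) ≠ 0 := by
    push_neg at hC; exact hC
  -- denominator setup
  set 𝒰 : Set (Set (Set (M × M))) := {S | IsUfg S} with h𝒰
  have hden : Filter.Tendsto (fun k => ∑ᶠ S ∈ 𝒰, ∏ᶠ q ∈ S, ν k q) Filter.atTop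
      (nhds (∑ᶠ S ∈ 𝒰, ∏ᶠ q ∈ S, νlim q)) := by
    simp only [finsum_mem_fin]
    exact tendsto_finset_sum _ fun S _ => hprod S
  have hdennz : (∑ᶠ S ∈ 𝒰, ∏ᶠ q ∈ S, νlim q) ≠ 0 := by
    rw [finsum_mem_fin]
    have hnonneg : ∀ S ∈ 𝒰.toFinite.toFinset, 0 ≤ ∏ᶠ q ∈ S, νlim q := by
      intro S _
      rw [finprod_mem_fin]
      exact Finset.prod_nonneg fun q _ => hposl q
    have hmem : S₀ ∈ 𝒰.toFinite.toFinset := by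
      simp [Set.Finite.mem_toFinset, h𝒰, hS₀ufg]
    have := Finset.single_le_sum hnonneg hmem
    have h0 : 0 < ∏ᶠ q ∈ S₀, νlim q := lt_of_le_of_ne (by
      rw [finprod_mem_fin]; exact Finset.prod_nonneg fun q _ => hposl q) (Ne.symm hS₀)
    linarith
  -- per-point convergence of depths
  have hpt : ∀ p : Set (M × M),
      Filter.Tendsto (fun k => popDepth (ν k) p) Filter.atTop (nhds (popDepth νlim p)) := by
    intro p
    have hnum : Filter.Tendsto
        (fun k => ∑ᶠ S ∈ {S : Set (Set (M × M)) | IsUfg S ∧ p ∈ gam S}, ∏ᶠ q ∈ S, ν k q)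
        Filter.atTop
        (nhds (∑ᶠ S ∈ {S : Set (Set (M × M)) | IsUfg S ∧ p ∈ gam S}, ∏ᶠ q ∈ S, νlim q)) := by
      simp only [finsum_mem_fin]
      exact tendsto_finset_sum _ fun S _ => hprod S
    have hmain : Filter.Tendsto
        (fun k => (∑ᶠ S ∈ 𝒰, ∏ᶠ q ∈ S, ν k q)⁻¹ *
          ∑ᶠ S ∈ {S : Set (Set (M × M)) | IsUfg S ∧ p ∈ gam S}, ∏ᶠ q ∈ S, ν k q)
        Filter.atTop (nhds ((∑ᶠ S ∈ 𝒰, ∏ᶠ q ∈ S, νlim q)⁻¹ *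
          ∑ᶠ S ∈ {S : Set (Set (M × M)) | IsUfg S ∧ p ∈ gam S}, ∏ᶠ q ∈ S, νlim q)) :=
      (hden.inv₀ hdennz).mul hnum
    have heq : ∀ᶠ k in Filter.atTop, popDepth (ν k) p =
        (∑ᶠ S ∈ 𝒰, ∏ᶠ q ∈ S, ν k q)⁻¹ *
          ∑ᶠ S ∈ {S : Set (Set (M × M)) | IsUfg S ∧ p ∈ gam S}, ∏ᶠ q ∈ S, ν k q := by
      filter_upwards [(hprod S₀).eventually_ne hS₀] with k hk
      have : ¬ ∀ S : Set (Set (M × M)), IsUfg S → (∏ᶠ q ∈ S, ν k q) = 0 := fun h =>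
        hk (h S₀ hS₀ufg)
      unfold popDepth; rw [if_neg this]; rfl
    have hlimeq : popDepth νlim p = (∑ᶠ S ∈ 𝒰, ∏ᶠ q ∈ S, νlim q)⁻¹ *
        ∑ᶠ S ∈ {S : Set (Set (M × M)) | IsUfg S ∧ p ∈ gam S}, ∏ᶠ q ∈ S, νlim q := by
      have : ¬ ∀ S : Set (Set (M × M)), IsUfg S → (∏ᶠ q ∈ S, νlim q) = 0 := fun h =>
        hS₀ (h S₀ hS₀ufg)
      unfold popDepth; rw [if_neg this]
    rw [hlimeq]
    exact hmain.congr' (by filter_upwards [heq] with k hk using hk.symm)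
  intro ε hε
  have hall : ∀ᶠ k in Filter.atTop, ∀ p : Set (M × M),
      |popDepth (ν k) p - popDepth νlim p| < ε := by
    rw [Filter.eventually_all]
    intro p
    obtain ⟨N, hN⟩ := Metric.tendsto_atTop.1 (hpt p) ε hε
    refine Filter.eventually_atTop.2 ⟨N, fun k hk => ?_⟩
    have := hN k hk
    simpa [Real.dist_eq] using this
  obtain ⟨N, hN⟩ := Filter.eventually_atTop.1 hall
  exact ⟨N, fun k hk p _ => hN k hk p⟩
end

section
/- There exist a finite set M = {y₁, y₂, y₃} and two samples 𝒟 = (p₁, p₂, p₃) and 𝒟̃ = (p̃₁, p̃₂, p̃₃) of partial orders on M such that for every pair (a, b) ∈ M × M the counts #{i | (a,b) ∈ p_i} and #{i | (a,b) ∈ p̃_i} agree (identical sum-statistics), yet the empirical ufg depth of the partial order generated by (y₁, y₂) equals 1/2 with respect to the first sample and 7/10 with respect to the second sample. Consequently, the empirical ufg depth cannot be represented as a function of the sum-statistics of pairwise comparisons. -/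
open scoped Classical

variable {M : Type*}

namespace Aux

abbrev F := Fin 3
def mk (l : List (F × F)) : Set (F × F) := {z | z.1 = z.2 ∨ z ∈ l}
lemma mem_mk {l : List (F × F)} {z : F × F} : z ∈ mk l ↔ z.1 = z.2 ∨ z ∈ l := Iff.rfl

def P1 : Set (F × F) := mk [(0,1)]
def P2 : Set (F × F) := mk [(0,1),(0,2)]
def P3 : Set (F × F) := mk [(1,2),(0,2)]
def Q2 : Set (F × F) := mk [(0,2)]
def Q3 : Set (F × F) := mk [(0,1),(1,2),(0,2)]
def R0 : Set (F × F) := mk []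
def A12 : Set (F × F) := mk [(1,2)]

lemma isPO_mk (l : List (F × F))
    (h : ∀ x y z : F, (x = y ∨ (x,y) ∈ l) → (y = z ∨ (y,z) ∈ l) → (x = z ∨ (x,z) ∈ l))
    (h2 : ∀ x y : F, (x = y ∨ (x,y) ∈ l) → (y = x ∨ (y,x) ∈ l) → x = y) : IsPO (mk l) := by
  refine ⟨fun x => Or.inl rfl, fun x y hx hy => h2 x y hx hy, fun x y z hx hy => h x y z hx hy⟩

lemma isPO_P1 : IsPO P1 := isPO_mk _ (by decide) (by decide)
lemma isPO_P2 : IsPO P2 := isPO_mk _ (by decide) (by decide)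
lemma isPO_P3 : IsPO P3 := isPO_mk _ (by decide) (by decide)
lemma isPO_Q2 : IsPO Q2 := isPO_mk _ (by decide) (by decide)
lemma isPO_Q3 : IsPO Q3 := isPO_mk _ (by decide) (by decide)
lemma isPO_R0 : IsPO R0 := isPO_mk _ (by decide) (by decide)
lemma isPO_A12 : IsPO A12 := isPO_mk _ (by decide) (by decide)

lemma sub_mk {l l' : List (F × F)} (h : ∀ z : F × F, (z.1 = z.2 ∨ z ∈ l) → (z.1 = z.2 ∨ z ∈ l')) :
    mk l ⊆ mk l' := fun z hz => h z hz

lemma P1_sub_P2 : P1 ⊆ P2 := sub_mk (by decide)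

lemma mem_mk_of {l : List (F × F)} {z : F × F} (h : z.1 = z.2 ∨ z ∈ l) : z ∈ mk l := h
lemma not_mem_mk {l : List (F × F)} {z : F × F} (h : ¬(z.1 = z.2 ∨ z ∈ l)) : z ∉ mk l := h

lemma inter_mk {l1 l2 l3 : List (F × F)}
    (h : ∀ z : F × F, ((z.1 = z.2 ∨ z ∈ l1) ∧ (z.1 = z.2 ∨ z ∈ l2)) ↔ (z.1 = z.2 ∨ z ∈ l3)) :
    mk l1 ∩ mk l2 = mk l3 := Set.ext fun z => h z
lemma union_mk {l1 l2 l3 : List (F × F)}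
    (h : ∀ z : F × F, ((z.1 = z.2 ∨ z ∈ l1) ∨ (z.1 = z.2 ∨ z ∈ l2)) ↔ (z.1 = z.2 ∨ z ∈ l3)) :
    mk l1 ∪ mk l2 = mk l3 := Set.ext fun z => h z

example : P1 ∩ P3 = R0 := inter_mk (by decide)
example : P1 ∪ P3 = Q3 := union_mk (by decide)
example : ((0:F),(1:F)) ∈ P1 := mem_mk_of (by decide)
lemma ne_mk {l l' : List (F × F)} {z : F × F} (h1 : z.1 = z.2 ∨ z ∈ l) (h2 : ¬(z.1 = z.2 ∨ z ∈ l')) :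
    mk l ≠ mk l' := fun h => (h ▸ (show z ∈ mk l from h1) : z ∈ mk l') |> h2
lemma ne_mk' {l l' : List (F × F)} {z : F × F} (h1 : ¬(z.1 = z.2 ∨ z ∈ l)) (h2 : z.1 = z.2 ∨ z ∈ l') :
    mk l ≠ mk l' := fun h => h1 (show z ∈ mk l from h ▸ (show z ∈ mk l' from h2))

lemma gam_mem {P : Set (Set (F × F))} {q : Set (F × F)} :
    q ∈ gam P ↔ IsPO q ∧ (⋂ p ∈ P, p) ⊆ q ∧ q ⊆ ⋃ p ∈ P, p := Iff.rfl

lemma gam_empty : gam (∅ : Set (Set (F × F))) = ∅ := by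
  ext q
  simp only [Set.mem_empty_iff_false, iff_false]
  intro hq
  obtain ⟨-, h1, h2⟩ := gam_mem.mp hq
  have h0 : ((0:F),(0:F)) ∈ ⋂ p ∈ (∅ : Set (Set (F × F))), p := by simp
  exact absurd (h2 (h1 h0)) (by simp)

lemma gam_singleton {x : Set (F × F)} (hx : IsPO x) : gam {x} = {x} := by
  have hI : (⋂ p ∈ ({x} : Set (Set (F × F))), p) = x := by simp
  have hU : (⋃ p ∈ ({x} : Set (Set (F × F))), p) = x := by simp
  ext q
  rw [Set.mem_singleton_iff, gam_mem, hI, hU]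
  exact ⟨fun ⟨_, h1, h2⟩ => Set.Subset.antisymm h2 h1, fun h => by subst h; exact ⟨hx, subset_rfl, subset_rfl⟩⟩

lemma self_subset_gam {S : Set (Set (F × F))} (h : S ⊆ Posets F) : S ⊆ gam S :=
  fun x hx => ⟨h hx, Set.biInter_subset_of_mem (t := fun p : Set (F × F) => p) hx, Set.subset_biUnion_of_mem (u := fun p : Set (F × F) => p) hx⟩

lemma ssubset_parts {α : Type*} {A S : Set α} (h : A ⊂ S) : A ⊆ S ∧ A ≠ S :=
  ⟨h.subset, h.ne⟩

lemma isUfg_of_witness {S : Set (Set (F × F))} (h1 : S ⊆ Posets F) (w : Set (F × F))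
    (hwg : w ∈ gam S) (hwS : w ∉ S) (hA : ∀ A, A ⊂ S → w ∉ gam A) : IsUfg S := by
  refine ⟨h1, ?_, ?_⟩
  · rw [Set.ssubset_def]
    exact ⟨self_subset_gam h1, fun hc => hwS (hc hwg)⟩
  · rintro ⟨ℓ, A, hAs, hU⟩
    have hw2 : w ∈ ⋃ i, gam (A i) := hU.symm ▸ hwg
    obtain ⟨i, hi⟩ := Set.mem_iUnion.mp hw2
    exact hA _ (hAs i) hi

lemma subset_pair_cases {α : Type*} {a b : α} {A : Set α} (h : A ⊆ {a, b}) :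
    A = ∅ ∨ A = {a} ∨ A = {b} ∨ A = {a, b} := by
  by_cases ha : a ∈ A <;> by_cases hb : b ∈ A
  · refine Or.inr (Or.inr (Or.inr (Set.Subset.antisymm h ?_)))
    intro x hx
    simp only [Set.mem_insert_iff, Set.mem_singleton_iff] at hx
    rcases hx with rfl | rfl <;> assumption
  · refine Or.inr (Or.inl (Set.Subset.antisymm ?_ (by simpa using ha)))
    intro x hx
    have h' := h hx
    simp only [Set.mem_insert_iff, Set.mem_singleton_iff] at h' ⊢
    rcases h' with rfl | rfl
    · rfl
    · exact absurd hx hb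
  · refine Or.inr (Or.inr (Or.inl (Set.Subset.antisymm ?_ (by simpa using hb))))
    intro x hx
    have h' := h hx
    simp only [Set.mem_insert_iff, Set.mem_singleton_iff] at h' ⊢
    rcases h' with rfl | rfl
    · exact absurd hx ha
    · rfl
  · refine Or.inl (Set.eq_empty_iff_forall_notMem.mpr fun x hx => ?_)
    have h' := h hx
    simp only [Set.mem_insert_iff, Set.mem_singleton_iff] at h'
    rcases h' with rfl | rfl
    · exact ha hx
    · exact hb hx

lemma subset_triple_cases {α : Type*} {a b c : α} {A : Set α} (h : A ⊆ {a, b, c}) :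
    A = ∅ ∨ A = {a} ∨ A = {b} ∨ A = {c} ∨ A = {a, b} ∨ A = {a, c} ∨ A = {b, c} ∨
      A = {a, b, c} := by
  by_cases ha : a ∈ A
  · have h' : A \ {a} ⊆ {b, c} := by
      intro x hx
      obtain ⟨hx1, hx2⟩ := hx
      have := h hx1
      simp only [Set.mem_insert_iff, Set.mem_singleton_iff] at this ⊢
      simp only [Set.mem_singleton_iff] at hx2
      tauto
    have hA : A = insert a (A \ {a}) := by
      rw [Set.insert_diff_singleton, Set.insert_eq_self.mpr ha]
    rcases subset_pair_cases h' with h0 | h0 | h0 | h0 <;> rw [h0] at hA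
    · exact Or.inr (Or.inl (by simpa using hA))
    · exact Or.inr (Or.inr (Or.inr (Or.inr (Or.inl hA))))
    · exact Or.inr (Or.inr (Or.inr (Or.inr (Or.inr (Or.inl hA)))))
    · exact Or.inr (Or.inr (Or.inr (Or.inr (Or.inr (Or.inr (Or.inr hA))))))
  · have h' : A ⊆ {b, c} := by
      intro x hx
      have := h hx
      simp only [Set.mem_insert_iff, Set.mem_singleton_iff] at this ⊢
      rcases this with rfl | h2
      · exact absurd hx ha
      · exact h2
    rcases subset_pair_cases h' with h0 | h0 | h0 | h0
    · exact Or.inl h0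
    · exact Or.inr (Or.inr (Or.inl h0))
    · exact Or.inr (Or.inr (Or.inr (Or.inl h0)))
    · exact Or.inr (Or.inr (Or.inr (Or.inr (Or.inr (Or.inr (Or.inl h0))))))

lemma not_ufg_empty : ¬ IsUfg (∅ : Set (Set (F × F))) := by
  intro h
  have h2 := h.2.1
  rw [gam_empty] at h2
  exact h2.ne rfl

lemma not_ufg_singleton {x : Set (F × F)} (hx : IsPO x) : ¬ IsUfg {x} := by
  intro h
  have h2 := h.2.1
  rw [gam_singleton hx] at h2
  exact h2.ne rfl

lemma notMem_gam_ssubset_pair {a b w : Set (F × F)} (ha : IsPO a) (hb : IsPO b)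
    (hwa : w ≠ a) (hwb : w ≠ b) :
    ∀ A, A ⊂ ({a, b} : Set (Set (F × F))) → w ∉ gam A := by
  intro A hA hw
  rcases subset_pair_cases hA.subset with rfl | rfl | rfl | rfl
  · rw [gam_empty] at hw; exact hw
  · rw [gam_singleton ha] at hw; exact hwa hw
  · rw [gam_singleton hb] at hw; exact hwb hw
  · exact hA.ne rfl

lemma Ipair (a b : Set (F × F)) : (⋂ p ∈ ({a, b} : Set (Set (F × F))), p) = a ∩ b := by simp
lemma Upair (a b : Set (F × F)) : (⋃ p ∈ ({a, b} : Set (Set (F × F))), p) = a ∪ b := by simp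
lemma Itriple (a b c : Set (F × F)) :
    (⋂ p ∈ ({a, b, c} : Set (Set (F × F))), p) = a ∩ (b ∩ c) := by simp [Set.iInter_inter_distrib]
lemma Utriple (a b c : Set (F × F)) :
    (⋃ p ∈ ({a, b, c} : Set (Set (F × F))), p) = a ∪ (b ∪ c) := by simp

lemma gam_congr {P P' : Set (Set (F × F))} (hI : (⋂ p ∈ P, p) = ⋂ p ∈ P', p)
    (hU : (⋃ p ∈ P, p) = ⋃ p ∈ P', p) : gam P = gam P' := by
  unfold gam; rw [hI, hU]

lemma pair_sub {a b : Set (F × F)} (ha : IsPO a) (hb : IsPO b) :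
    ({a, b} : Set (Set (F × F))) ⊆ Posets F := by
  intro x hx
  simp only [Set.mem_insert_iff, Set.mem_singleton_iff] at hx
  rcases hx with rfl | rfl
  · exact ha
  · exact hb

lemma triple_sub {a b c : Set (F × F)} (ha : IsPO a) (hb : IsPO b) (hc : IsPO c) :
    ({a, b, c} : Set (Set (F × F))) ⊆ Posets F := by
  intro x hx
  simp only [Set.mem_insert_iff, Set.mem_singleton_iff] at hx
  rcases hx with rfl | rfl | rfl
  · exact ha
  · exact hb
  · exact hc

-- concrete intersections/unions
lemma I12 : (⋂ p ∈ ({P1, P2} : Set (Set (F × F))), p) = P1 :=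
  (Ipair _ _).trans (inter_mk (by decide))
lemma U12 : (⋃ p ∈ ({P1, P2} : Set (Set (F × F))), p) = P2 :=
  (Upair _ _).trans (union_mk (by decide))
lemma I13 : (⋂ p ∈ ({P1, P3} : Set (Set (F × F))), p) = R0 :=
  (Ipair _ _).trans (inter_mk (by decide))
lemma U13 : (⋃ p ∈ ({P1, P3} : Set (Set (F × F))), p) = Q3 :=
  (Upair _ _).trans (union_mk (by decide))
lemma I23 : (⋂ p ∈ ({P2, P3} : Set (Set (F × F))), p) = Q2 :=
  (Ipair _ _).trans (inter_mk (by decide))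
lemma U23 : (⋃ p ∈ ({P2, P3} : Set (Set (F × F))), p) = Q3 :=
  (Upair _ _).trans (union_mk (by decide))
lemma I123 : (⋂ p ∈ ({P1, P2, P3} : Set (Set (F × F))), p) = R0 := by
  rw [Itriple, show P2 ∩ P3 = Q2 from inter_mk (by decide)]
  exact inter_mk (by decide)
lemma U123 : (⋃ p ∈ ({P1, P2, P3} : Set (Set (F × F))), p) = Q3 := by
  rw [Utriple, show P2 ∪ P3 = Q3 from union_mk (by decide)]
  exact union_mk (by decide)
-- sample 2 : {P1, Q2, Q3}
lemma J12 : (⋂ p ∈ ({P1, Q2} : Set (Set (F × F))), p) = R0 :=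
  (Ipair _ _).trans (inter_mk (by decide))
lemma V12 : (⋃ p ∈ ({P1, Q2} : Set (Set (F × F))), p) = P2 :=
  (Upair _ _).trans (union_mk (by decide))
lemma J13 : (⋂ p ∈ ({P1, Q3} : Set (Set (F × F))), p) = P1 :=
  (Ipair _ _).trans (inter_mk (by decide))
lemma V13 : (⋃ p ∈ ({P1, Q3} : Set (Set (F × F))), p) = Q3 :=
  (Upair _ _).trans (union_mk (by decide))
lemma J23 : (⋂ p ∈ ({Q2, Q3} : Set (Set (F × F))), p) = Q2 :=
  (Ipair _ _).trans (inter_mk (by decide))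
lemma V23 : (⋃ p ∈ ({Q2, Q3} : Set (Set (F × F))), p) = Q3 :=
  (Upair _ _).trans (union_mk (by decide))
lemma J123 : (⋂ p ∈ ({P1, Q2, Q3} : Set (Set (F × F))), p) = R0 := by
  rw [Itriple, show Q2 ∩ Q3 = Q2 from inter_mk (by decide)]
  exact inter_mk (by decide)
lemma V123 : (⋃ p ∈ ({P1, Q2, Q3} : Set (Set (F × F))), p) = Q3 := by
  rw [Utriple, show Q2 ∪ Q3 = Q3 from union_mk (by decide)]
  exact union_mk (by decide)

lemma not_ufg_P12 : ¬ IsUfg ({P1, P2} : Set (Set (F × F))) := by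
  intro h
  have hg : gam ({P1, P2} : Set (Set (F × F))) = {P1, P2} := by
    apply Set.Subset.antisymm
    · intro q hq
      obtain ⟨hpo, h1, h2⟩ := gam_mem.mp hq
      rw [I12] at h1
      rw [U12] at h2
      simp only [Set.mem_insert_iff, Set.mem_singleton_iff]
      by_cases h02 : ((0:F), (2:F)) ∈ q
      · right
        apply Set.Subset.antisymm h2
        intro z hz
        rcases (mem_mk.mp hz) with hd | hl
        · exact h1 (mem_mk_of (Or.inl hd))
        · simp only [List.mem_cons, List.mem_singleton, List.not_mem_nil, or_false] at hl
          rcases hl with rfl | rfl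
          · exact h1 (mem_mk_of (by decide))
          · exact h02
      · left
        apply Set.Subset.antisymm ?_ h1
        intro z hz
        rcases (mem_mk.mp (h2 hz)) with hd | hl
        · exact mem_mk_of (Or.inl hd)
        · simp only [List.mem_cons, List.mem_singleton, List.not_mem_nil, or_false] at hl
          rcases hl with rfl | rfl
          · exact mem_mk_of (by decide)
          · exact absurd hz h02
    · exact self_subset_gam (pair_sub isPO_P1 isPO_P2)
  exact h.2.1.ne hg.symm

lemma not_ufg_T1 : ¬ IsUfg ({P1, P2, P3} : Set (Set (F × F))) := by
  intro h
  apply h.2.2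
  refine ⟨1, fun _ => {P1, P3}, fun i => ?_, ?_⟩
  · rw [Set.ssubset_def]
    constructor
    · intro x hx
      simp only [Set.mem_insert_iff, Set.mem_singleton_iff] at hx ⊢
      tauto
    · intro hc
      have := hc (show P2 ∈ ({P1, P2, P3} : Set (Set (F × F))) by simp)
      simp only [Set.mem_insert_iff, Set.mem_singleton_iff] at this
      rcases this with h' | h'
      · exact ne_mk (l := [(0,1),(0,2)]) (l' := [(0,1)]) (z := ((0:F),(2:F)))
          (by decide) (by decide) h'
      · exact ne_mk (l := [(0,1),(0,2)]) (l' := [(1,2),(0,2)]) (z := ((0:F),(1:F)))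
          (by decide) (by decide) h'
  · rw [Set.iUnion_const]
    exact gam_congr (I13.trans I123.symm) (U13.trans U123.symm)

-- ufg sets for sample 1
lemma ufg_S13 : IsUfg ({P1, P3} : Set (Set (F × F))) := by
  apply isUfg_of_witness (pair_sub isPO_P1 isPO_P3) R0
  · exact gam_mem.mpr ⟨isPO_R0, by rw [I13], by rw [U13]; exact sub_mk (by decide)⟩
  · intro hc
    simp only [Set.mem_insert_iff, Set.mem_singleton_iff] at hc
    rcases hc with h' | h'
    · exact ne_mk' (l := []) (l' := [(0,1)]) (z := ((0:F),(1:F))) (by decide) (by decide) h'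
    · exact ne_mk' (l := []) (l' := [(1,2),(0,2)]) (z := ((0:F),(2:F))) (by decide) (by decide) h'
  · exact notMem_gam_ssubset_pair isPO_P1 isPO_P3
      (ne_mk' (z := ((0:F),(1:F))) (by decide) (by decide))
      (ne_mk' (z := ((0:F),(2:F))) (by decide) (by decide))

lemma ufg_S23 : IsUfg ({P2, P3} : Set (Set (F × F))) := by
  apply isUfg_of_witness (pair_sub isPO_P2 isPO_P3) Q2
  · exact gam_mem.mpr ⟨isPO_Q2, by rw [I23], by rw [U23]; exact sub_mk (by decide)⟩
  · intro hc
    simp only [Set.mem_insert_iff, Set.mem_singleton_iff] at hc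
    rcases hc with h' | h'
    · exact ne_mk' (l := [(0,2)]) (l' := [(0,1),(0,2)]) (z := ((0:F),(1:F))) (by decide) (by decide) h'
    · exact ne_mk' (l := [(0,2)]) (l' := [(1,2),(0,2)]) (z := ((1:F),(2:F))) (by decide) (by decide) h'
  · exact notMem_gam_ssubset_pair isPO_P2 isPO_P3
      (ne_mk' (z := ((0:F),(1:F))) (by decide) (by decide))
      (ne_mk' (z := ((1:F),(2:F))) (by decide) (by decide))

lemma ufg_T12 : IsUfg ({P1, Q2} : Set (Set (F × F))) := by
  apply isUfg_of_witness (pair_sub isPO_P1 isPO_Q2) R0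
  · exact gam_mem.mpr ⟨isPO_R0, by rw [J12], by rw [V12]; exact sub_mk (by decide)⟩
  · intro hc
    simp only [Set.mem_insert_iff, Set.mem_singleton_iff] at hc
    rcases hc with h' | h'
    · exact ne_mk' (l := []) (l' := [(0,1)]) (z := ((0:F),(1:F))) (by decide) (by decide) h'
    · exact ne_mk' (l := []) (l' := [(0,2)]) (z := ((0:F),(2:F))) (by decide) (by decide) h'
  · exact notMem_gam_ssubset_pair isPO_P1 isPO_Q2
      (ne_mk' (z := ((0:F),(1:F))) (by decide) (by decide))
      (ne_mk' (z := ((0:F),(2:F))) (by decide) (by decide))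

lemma ufg_T13 : IsUfg ({P1, Q3} : Set (Set (F × F))) := by
  apply isUfg_of_witness (pair_sub isPO_P1 isPO_Q3) P2
  · exact gam_mem.mpr ⟨isPO_P2, by rw [J13]; exact sub_mk (by decide),
      by rw [V13]; exact sub_mk (by decide)⟩
  · intro hc
    simp only [Set.mem_insert_iff, Set.mem_singleton_iff] at hc
    rcases hc with h' | h'
    · exact ne_mk (l := [(0,1),(0,2)]) (l' := [(0,1)]) (z := ((0:F),(2:F))) (by decide) (by decide) h'
    · exact ne_mk' (l := [(0,1),(0,2)]) (l' := [(0,1),(1,2),(0,2)]) (z := ((1:F),(2:F)))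
        (by decide) (by decide) h'
  · exact notMem_gam_ssubset_pair isPO_P1 isPO_Q3
      (ne_mk (z := ((0:F),(2:F))) (by decide) (by decide))
      (ne_mk' (z := ((1:F),(2:F))) (by decide) (by decide))

lemma ufg_T23 : IsUfg ({Q2, Q3} : Set (Set (F × F))) := by
  apply isUfg_of_witness (pair_sub isPO_Q2 isPO_Q3) P2
  · exact gam_mem.mpr ⟨isPO_P2, by rw [J23]; exact sub_mk (by decide),
      by rw [V23]; exact sub_mk (by decide)⟩
  · intro hc
    simp only [Set.mem_insert_iff, Set.mem_singleton_iff] at hc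
    rcases hc with h' | h'
    · exact ne_mk (l := [(0,1),(0,2)]) (l' := [(0,2)]) (z := ((0:F),(1:F))) (by decide) (by decide) h'
    · exact ne_mk' (l := [(0,1),(0,2)]) (l' := [(0,1),(1,2),(0,2)]) (z := ((1:F),(2:F)))
        (by decide) (by decide) h'
  · exact notMem_gam_ssubset_pair isPO_Q2 isPO_Q3
      (ne_mk (z := ((0:F),(1:F))) (by decide) (by decide))
      (ne_mk' (z := ((1:F),(2:F))) (by decide) (by decide))

lemma ufg_T123 : IsUfg ({P1, Q2, Q3} : Set (Set (F × F))) := by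
  apply isUfg_of_witness (triple_sub isPO_P1 isPO_Q2 isPO_Q3) A12
  · exact gam_mem.mpr ⟨isPO_A12, by rw [J123]; exact sub_mk (by decide),
      by rw [V123]; exact sub_mk (by decide)⟩
  · intro hc
    simp only [Set.mem_insert_iff, Set.mem_singleton_iff] at hc
    rcases hc with h' | h' | h'
    · exact ne_mk (l := [(1,2)]) (l' := [(0,1)]) (z := ((1:F),(2:F))) (by decide) (by decide) h'
    · exact ne_mk (l := [(1,2)]) (l' := [(0,2)]) (z := ((1:F),(2:F))) (by decide) (by decide) h'
    · exact ne_mk' (l := [(1,2)]) (l' := [(0,1),(1,2),(0,2)]) (z := ((0:F),(1:F)))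
        (by decide) (by decide) h'
  · -- no proper subset's closure contains A12
    intro A hA hw
    obtain ⟨hpo, hI, hU⟩ := gam_mem.mp hw
    have h12 : ((1:F),(2:F)) ∈ ⋃ p ∈ A, p := hU (mem_mk_of (by decide))
    rw [Set.mem_iUnion₂] at h12
    obtain ⟨p, hpA, hp12⟩ := h12
    have hsub := hA.subset
    have hp : p = Q3 := by
      have h' := hsub hpA
      simp only [Set.mem_insert_iff, Set.mem_singleton_iff] at h'
      rcases h' with rfl | rfl | rfl
      · exact absurd hp12 (not_mem_mk (by decide))
      · exact absurd hp12 (not_mem_mk (by decide))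
      · rfl
    subst hp
    obtain ⟨x, hxS, hxA⟩ := Set.exists_of_ssubset hA
    simp only [Set.mem_insert_iff, Set.mem_singleton_iff] at hxS
    rcases hxS with rfl | rfl | rfl
    · -- P1 ∉ A, so (0,2) belongs to every member of A
      have h02 : ((0:F),(2:F)) ∈ ⋂ p ∈ A, p := by
        rw [Set.mem_iInter₂]
        intro q hqA
        have h' := hsub hqA
        simp only [Set.mem_insert_iff, Set.mem_singleton_iff] at h'
        rcases h' with rfl | rfl | rfl
        · exact absurd hqA hxA
        · exact mem_mk_of (by decide)
        · exact mem_mk_of (by decide)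
      exact absurd (hI h02) (not_mem_mk (by decide))
    · -- Q2 ∉ A, so (0,1) belongs to every member of A
      have h01 : ((0:F),(1:F)) ∈ ⋂ p ∈ A, p := by
        rw [Set.mem_iInter₂]
        intro q hqA
        have h' := hsub hqA
        simp only [Set.mem_insert_iff, Set.mem_singleton_iff] at h'
        rcases h' with rfl | rfl | rfl
        · exact mem_mk_of (by decide)
        · exact absurd hqA hxA
        · exact mem_mk_of (by decide)
      exact absurd (hI h01) (not_mem_mk (by decide))
    · exact hxA hpA


def samp1 : Fin 3 → Set (F × F) := ![P1, P2, P3]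
def samp2 : Fin 3 → Set (F × F) := ![P1, Q2, Q3]

lemma filter_sample_eq {s : Fin 3 → Set (F × F)} {q : Set (F × F)} {j : Fin 3}
    (h : ∀ i, s i = q ↔ i = j) :
    (Finset.univ.filter fun i => s i = q) = {j} := by
  ext i
  simp [Finset.mem_filter, h i]

lemma nu_eq_third {s : Fin 3 → Set (F × F)} {q : Set (F × F)} {j : Fin 3}
    (h : ∀ i, s i = q ↔ i = j) : nuEmp 3 s q = 1/3 := by
  rw [nuEmp, filter_sample_eq h]
  norm_num

lemma nu_zero {s : Fin 3 → Set (F × F)} {q : Set (F × F)} (h : ∀ i, s i ≠ q) :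
    nuEmp 3 s q = 0 := by
  rw [nuEmp, Finset.filter_eq_empty_iff.mpr fun i _ => h i]
  simp

-- distinctness
lemma P1_ne_P2 : P1 ≠ P2 := ne_mk' (z := ((0:F),(2:F))) (by decide) (by decide)
lemma P1_ne_P3 : P1 ≠ P3 := ne_mk (z := ((0:F),(1:F))) (by decide) (by decide)
lemma P2_ne_P3 : P2 ≠ P3 := ne_mk (z := ((0:F),(1:F))) (by decide) (by decide)
lemma P1_ne_Q2 : P1 ≠ Q2 := ne_mk (z := ((0:F),(1:F))) (by decide) (by decide)
lemma P1_ne_Q3 : P1 ≠ Q3 := ne_mk' (z := ((1:F),(2:F))) (by decide) (by decide)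
lemma Q2_ne_Q3 : Q2 ≠ Q3 := ne_mk' (z := ((0:F),(1:F))) (by decide) (by decide)

lemma nu1_P1 : nuEmp 3 samp1 P1 = 1/3 := by
  apply nu_eq_third (j := 0)
  intro i
  fin_cases i
  · simp [samp1]
  · simp [samp1]
    exact P1_ne_P2.symm
  · simp [samp1]
    exact P1_ne_P3.symm

lemma nu1_P2 : nuEmp 3 samp1 P2 = 1/3 := by
  apply nu_eq_third (j := 1)
  intro i
  fin_cases i
  · simp [samp1]; exact P1_ne_P2
  · simp [samp1]
  · simp [samp1]; exact P2_ne_P3.symm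

lemma nu1_P3 : nuEmp 3 samp1 P3 = 1/3 := by
  apply nu_eq_third (j := 2)
  intro i
  fin_cases i
  · simp [samp1]; exact P1_ne_P3
  · simp [samp1]; exact P2_ne_P3
  · simp [samp1]

lemma nu2_P1 : nuEmp 3 samp2 P1 = 1/3 := by
  apply nu_eq_third (j := 0)
  intro i
  fin_cases i
  · simp [samp2]
  · simp [samp2]; exact P1_ne_Q2.symm
  · simp [samp2]; exact P1_ne_Q3.symm

lemma nu2_Q2 : nuEmp 3 samp2 Q2 = 1/3 := by
  apply nu_eq_third (j := 1)
  intro i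
  fin_cases i
  · simp [samp2]; exact P1_ne_Q2
  · simp [samp2]
  · simp [samp2]; exact Q2_ne_Q3.symm

lemma nu2_Q3 : nuEmp 3 samp2 Q3 = 1/3 := by
  apply nu_eq_third (j := 2)
  intro i
  fin_cases i
  · simp [samp2]; exact P1_ne_Q3
  · simp [samp2]; exact Q2_ne_Q3
  · simp [samp2]

lemma finprod_zero {S : Set (Set (F × F))} {ν : Set (F × F) → ℝ} {q : Set (F × F)}
    (hq : q ∈ S) (h0 : ν q = 0) : (∏ᶠ r ∈ S, ν r) = 0 := by
  rw [finprod_mem_eq_finite_toFinset_prod _ (Set.toFinite S)]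
  exact Finset.prod_eq_zero (by simpa using hq) h0

lemma fin_pair {a b : Set (F × F)} (hab : a ≠ b) (ν : Set (F × F) → ℝ) :
    (∏ᶠ q ∈ ({a, b} : Set (Set (F × F))), ν q) = ν a * ν b := finprod_mem_pair hab

lemma fin_triple {a b c : Set (F × F)} (hab : a ≠ b) (hac : a ≠ c) (hbc : b ≠ c)
    (ν : Set (F × F) → ℝ) :
    (∏ᶠ q ∈ ({a, b, c} : Set (Set (F × F))), ν q) = ν a * (ν b * ν c) := by
  have h : ({a, b, c} : Set (Set (F × F))) = (({a, b, c} : Finset (Set (F × F))) : Set _) := by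
    simp
  rw [h, finprod_mem_coe_finset, Finset.prod_insert (by simp [hab, hac]),
    Finset.prod_insert (by simp [hbc]), Finset.prod_singleton]

lemma sample1_mem {q : Set (F × F)} (h : ∀ i, samp1 i ≠ q) (hq : q ∈ ({P1, P2, P3} : Set (Set (F × F)))) : False := by
  simp only [Set.mem_insert_iff, Set.mem_singleton_iff] at hq
  rcases hq with rfl | rfl | rfl
  · exact h 0 (by simp [samp1])
  · exact h 1 (by simp [samp1])
  · exact h 2 (by simp [samp1])

lemma support_sub1 {S : Set (Set (F × F))} (hne : (∏ᶠ q ∈ S, nuEmp 3 samp1 q) ≠ 0) :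
    S ⊆ {P1, P2, P3} := by
  intro q hq
  by_contra hq3
  refine hne (finprod_zero hq (nu_zero fun i h => hq3 ?_))
  fin_cases i <;> rw [← h] <;> simp [samp1]

lemma ufg_class1 {S : Set (Set (F × F))} (hufg : IsUfg S)
    (hne : (∏ᶠ q ∈ S, nuEmp 3 samp1 q) ≠ 0) :
    S = {P1, P3} ∨ S = {P2, P3} := by
  rcases subset_triple_cases (support_sub1 hne) with rfl | rfl | rfl | rfl | rfl | h | h | rfl
  · exact absurd hufg not_ufg_empty
  · exact absurd hufg (not_ufg_singleton isPO_P1)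
  · exact absurd hufg (not_ufg_singleton isPO_P2)
  · exact absurd hufg (not_ufg_singleton isPO_P3)
  · exact absurd hufg not_ufg_P12
  · exact Or.inl h
  · exact Or.inr h
  · exact absurd hufg not_ufg_T1

lemma support_sub2 {S : Set (Set (F × F))} (hne : (∏ᶠ q ∈ S, nuEmp 3 samp2 q) ≠ 0) :
    S ⊆ {P1, Q2, Q3} := by
  intro q hq
  by_contra hq3
  refine hne (finprod_zero hq (nu_zero fun i h => hq3 ?_))
  fin_cases i <;> rw [← h] <;> simp [samp2]

lemma ufg_class2 {S : Set (Set (F × F))} (hufg : IsUfg S)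
    (hne : (∏ᶠ q ∈ S, nuEmp 3 samp2 q) ≠ 0) :
    S = {P1, Q2} ∨ S = {P1, Q3} ∨ S = {Q2, Q3} ∨ S = {P1, Q2, Q3} := by
  rcases subset_triple_cases (support_sub2 hne) with rfl | rfl | rfl | rfl | h | h | h | h
  · exact absurd hufg not_ufg_empty
  · exact absurd hufg (not_ufg_singleton isPO_P1)
  · exact absurd hufg (not_ufg_singleton isPO_Q2)
  · exact absurd hufg (not_ufg_singleton isPO_Q3)
  · exact Or.inl h
  · exact Or.inr (Or.inl h)
  · exact Or.inr (Or.inr (Or.inl h))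
  · exact Or.inr (Or.inr (Or.inr h))

-- values of the products on the relevant ufg sets
lemma f1_S13 : (∏ᶠ q ∈ ({P1, P3} : Set (Set (F × F))), nuEmp 3 samp1 q) = 1/9 := by
  rw [fin_pair P1_ne_P3, nu1_P1, nu1_P3]; norm_num
lemma f1_S23 : (∏ᶠ q ∈ ({P2, P3} : Set (Set (F × F))), nuEmp 3 samp1 q) = 1/9 := by
  rw [fin_pair P2_ne_P3, nu1_P2, nu1_P3]; norm_num
lemma f2_T12 : (∏ᶠ q ∈ ({P1, Q2} : Set (Set (F × F))), nuEmp 3 samp2 q) = 1/9 := by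
  rw [fin_pair P1_ne_Q2, nu2_P1, nu2_Q2]; norm_num
lemma f2_T13 : (∏ᶠ q ∈ ({P1, Q3} : Set (Set (F × F))), nuEmp 3 samp2 q) = 1/9 := by
  rw [fin_pair P1_ne_Q3, nu2_P1, nu2_Q3]; norm_num
lemma f2_T23 : (∏ᶠ q ∈ ({Q2, Q3} : Set (Set (F × F))), nuEmp 3 samp2 q) = 1/9 := by
  rw [fin_pair Q2_ne_Q3, nu2_Q2, nu2_Q3]; norm_num
lemma f2_T123 : (∏ᶠ q ∈ ({P1, Q2, Q3} : Set (Set (F × F))), nuEmp 3 samp2 q) = 1/27 := by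
  rw [fin_triple P1_ne_Q2 P1_ne_Q3 Q2_ne_Q3, nu2_P1, nu2_Q2, nu2_Q3]; norm_num

-- gam membership of p = P1
lemma P1_mem_gam_S13 : P1 ∈ gam ({P1, P3} : Set (Set (F × F))) :=
  self_subset_gam (pair_sub isPO_P1 isPO_P3) (by simp)
lemma P1_notMem_gam_S23 : P1 ∉ gam ({P2, P3} : Set (Set (F × F))) := by
  intro h
  obtain ⟨-, h1, -⟩ := gam_mem.mp h
  rw [I23] at h1
  exact absurd (h1 (mem_mk_of (z := ((0:F),(2:F))) (by decide)))
    (not_mem_mk (z := ((0:F),(2:F))) (by decide))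
lemma P1_mem_gam_T12 : P1 ∈ gam ({P1, Q2} : Set (Set (F × F))) :=
  self_subset_gam (pair_sub isPO_P1 isPO_Q2) (by simp)
lemma P1_mem_gam_T13 : P1 ∈ gam ({P1, Q3} : Set (Set (F × F))) :=
  self_subset_gam (pair_sub isPO_P1 isPO_Q3) (by simp)
lemma P1_notMem_gam_T23 : P1 ∉ gam ({Q2, Q3} : Set (Set (F × F))) := by
  intro h
  obtain ⟨-, h1, -⟩ := gam_mem.mp h
  rw [J23] at h1
  exact absurd (h1 (mem_mk_of (z := ((0:F),(2:F))) (by decide)))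
    (not_mem_mk (z := ((0:F),(2:F))) (by decide))
lemma P1_mem_gam_T123 : P1 ∈ gam ({P1, Q2, Q3} : Set (Set (F × F))) :=
  self_subset_gam (triple_sub isPO_P1 isPO_Q2 isPO_Q3) (by simp)

lemma ne_sets {α : Type*} {s t : Set α} {x : α} (hx : x ∈ s) (hx' : x ∉ t) : s ≠ t :=
  fun h => hx' (h ▸ hx)

lemma S13_ne_S23 : ({P1, P3} : Set (Set (F × F))) ≠ {P2, P3} :=
  ne_sets (x := P1) (by simp) (by simp [P1_ne_P2, P1_ne_P3])
lemma T12_ne_T13 : ({P1, Q2} : Set (Set (F × F))) ≠ {P1, Q3} :=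
  ne_sets (x := Q2) (by simp) (by simp [P1_ne_Q2.symm, Q2_ne_Q3])
lemma T12_ne_T23 : ({P1, Q2} : Set (Set (F × F))) ≠ {Q2, Q3} :=
  ne_sets (x := P1) (by simp) (by simp [P1_ne_Q2, P1_ne_Q3])
lemma T12_ne_T123 : ({P1, Q2} : Set (Set (F × F))) ≠ {P1, Q2, Q3} :=
  fun h => (by simp [Q2_ne_Q3.symm, P1_ne_Q3.symm] : Q3 ∉ ({P1, Q2} : Set (Set (F × F))))
    (h ▸ (by simp : Q3 ∈ ({P1, Q2, Q3} : Set (Set (F × F)))))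
lemma T13_ne_T23 : ({P1, Q3} : Set (Set (F × F))) ≠ {Q2, Q3} :=
  ne_sets (x := P1) (by simp) (by simp [P1_ne_Q2, P1_ne_Q3])
lemma T13_ne_T123 : ({P1, Q3} : Set (Set (F × F))) ≠ {P1, Q2, Q3} :=
  fun h => (by simp [P1_ne_Q2.symm, Q2_ne_Q3] : Q2 ∉ ({P1, Q3} : Set (Set (F × F))))
    (h ▸ (by simp : Q2 ∈ ({P1, Q2, Q3} : Set (Set (F × F)))))
lemma T23_ne_T123 : ({Q2, Q3} : Set (Set (F × F))) ≠ {P1, Q2, Q3} :=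
  fun h => (by simp [P1_ne_Q2, P1_ne_Q3] : P1 ∉ ({Q2, Q3} : Set (Set (F × F))))
    (h ▸ (by simp : P1 ∈ ({P1, Q2, Q3} : Set (Set (F × F)))))

lemma den1 : (∑ᶠ S ∈ {S : Set (Set (F × F)) | IsUfg S}, ∏ᶠ q ∈ S, nuEmp 3 samp1 q) = 2/9 := by
  rw [finsum_mem_eq_sum_of_inter_support_eq _
    (t := ({{P1, P3}, {P2, P3}} : Finset (Set (Set (F × F))))) ?_]
  · rw [Finset.sum_insert (by simpa using S13_ne_S23), Finset.sum_singleton, f1_S13, f1_S23]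
    norm_num
  · ext S
    simp only [Set.mem_inter_iff, Set.mem_setOf_eq, Function.mem_support, Finset.coe_insert,
      Finset.coe_singleton, Set.mem_insert_iff, Set.mem_singleton_iff]
    constructor
    · rintro ⟨h1, h2⟩
      exact ⟨ufg_class1 h1 h2, h2⟩
    · rintro ⟨rfl | rfl, h2⟩
      · exact ⟨ufg_S13, h2⟩
      · exact ⟨ufg_S23, h2⟩

lemma num1 :
    (∑ᶠ S ∈ {S : Set (Set (F × F)) | IsUfg S ∧ P1 ∈ gam S}, ∏ᶠ q ∈ S, nuEmp 3 samp1 q) = 1/9 := by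
  rw [finsum_mem_eq_sum_of_inter_support_eq _
    (t := ({{P1, P3}} : Finset (Set (Set (F × F))))) ?_]
  · rw [Finset.sum_singleton, f1_S13]
  · ext S
    simp only [Set.mem_inter_iff, Set.mem_setOf_eq, Function.mem_support, Finset.coe_singleton,
      Set.mem_singleton_iff]
    constructor
    · rintro ⟨⟨h1, hp⟩, h2⟩
      rcases ufg_class1 h1 h2 with rfl | rfl
      · exact ⟨rfl, h2⟩
      · exact absurd hp P1_notMem_gam_S23
    · rintro ⟨rfl, h2⟩
      exact ⟨⟨ufg_S13, P1_mem_gam_S13⟩, h2⟩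

lemma den2 : (∑ᶠ S ∈ {S : Set (Set (F × F)) | IsUfg S}, ∏ᶠ q ∈ S, nuEmp 3 samp2 q) = 10/27 := by
  rw [finsum_mem_eq_sum_of_inter_support_eq _
    (t := ({{P1, Q2}, {P1, Q3}, {Q2, Q3}, {P1, Q2, Q3}} : Finset (Set (Set (F × F))))) ?_]
  · have hm1 : ({P1, Q2} : Set (Set (F × F))) ∉
        ({{P1, Q3}, {Q2, Q3}, {P1, Q2, Q3}} : Finset (Set (Set (F × F)))) := by
      simp only [Finset.mem_insert, Finset.mem_singleton]
      push_neg
      exact ⟨T12_ne_T13, T12_ne_T23, T12_ne_T123⟩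
    have hm2 : ({P1, Q3} : Set (Set (F × F))) ∉
        ({{Q2, Q3}, {P1, Q2, Q3}} : Finset (Set (Set (F × F)))) := by
      simp only [Finset.mem_insert, Finset.mem_singleton]
      push_neg
      exact ⟨T13_ne_T23, T13_ne_T123⟩
    have hm3 : ({Q2, Q3} : Set (Set (F × F))) ∉
        ({{P1, Q2, Q3}} : Finset (Set (Set (F × F)))) := by
      simpa using T23_ne_T123
    rw [Finset.sum_insert hm1, Finset.sum_insert hm2, Finset.sum_insert hm3,
      Finset.sum_singleton, f2_T12, f2_T13, f2_T23, f2_T123]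
    norm_num
  · ext S
    simp only [Set.mem_inter_iff, Set.mem_setOf_eq, Function.mem_support, Finset.coe_insert,
      Finset.coe_singleton, Set.mem_insert_iff, Set.mem_singleton_iff]
    constructor
    · rintro ⟨h1, h2⟩
      exact ⟨ufg_class2 h1 h2, h2⟩
    · rintro ⟨rfl | rfl | rfl | rfl, h2⟩
      · exact ⟨ufg_T12, h2⟩
      · exact ⟨ufg_T13, h2⟩
      · exact ⟨ufg_T23, h2⟩
      · exact ⟨ufg_T123, h2⟩

lemma num2 :
    (∑ᶠ S ∈ {S : Set (Set (F × F)) | IsUfg S ∧ P1 ∈ gam S}, ∏ᶠ q ∈ S, nuEmp 3 samp2 q) = 7/27 := by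
  have hm1 : ({P1, Q2} : Set (Set (F × F))) ∉
      ({{P1, Q3}, {P1, Q2, Q3}} : Finset (Set (Set (F × F)))) := by
    simp only [Finset.mem_insert, Finset.mem_singleton]
    push_neg
    exact ⟨T12_ne_T13, T12_ne_T123⟩
  have hm2 : ({P1, Q3} : Set (Set (F × F))) ∉
      ({{P1, Q2, Q3}} : Finset (Set (Set (F × F)))) := by
    simpa using T13_ne_T123
  rw [finsum_mem_eq_sum_of_inter_support_eq _
    (t := ({{P1, Q2}, {P1, Q3}, {P1, Q2, Q3}} : Finset (Set (Set (F × F))))) ?_]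
  · rw [Finset.sum_insert hm1, Finset.sum_insert hm2, Finset.sum_singleton,
      f2_T12, f2_T13, f2_T123]
    norm_num
  · ext S
    simp only [Set.mem_inter_iff, Set.mem_setOf_eq, Function.mem_support, Finset.coe_insert,
      Finset.coe_singleton, Set.mem_insert_iff, Set.mem_singleton_iff]
    constructor
    · rintro ⟨⟨h1, hp⟩, h2⟩
      rcases ufg_class2 h1 h2 with rfl | rfl | rfl | rfl
      · exact ⟨Or.inl rfl, h2⟩
      · exact ⟨Or.inr (Or.inl rfl), h2⟩
      · exact absurd hp P1_notMem_gam_T23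
      · exact ⟨Or.inr (Or.inr rfl), h2⟩
    · rintro ⟨rfl | rfl | rfl, h2⟩
      · exact ⟨⟨ufg_T12, P1_mem_gam_T12⟩, h2⟩
      · exact ⟨⟨ufg_T13, P1_mem_gam_T13⟩, h2⟩
      · exact ⟨⟨ufg_T123, P1_mem_gam_T123⟩, h2⟩

lemma depth1 : popDepth (nuEmp 3 samp1) P1 = 1/2 := by
  unfold popDepth
  rw [if_neg, den1, num1]
  · norm_num
  · push_neg
    exact ⟨{P1, P3}, ufg_S13, by rw [f1_S13]; norm_num⟩

lemma depth2 : popDepth (nuEmp 3 samp2) P1 = 7/10 := by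
  unfold popDepth
  rw [if_neg, den2, num2]
  · norm_num
  · push_neg
    exact ⟨{P1, Q2}, ufg_T12, by rw [f2_T12]; norm_num⟩

lemma p_eq_P1 : ({z : Fin 3 × Fin 3 | z.1 = z.2} ∪ {((0 : Fin 3), (1 : Fin 3))}) = P1 := by
  ext z
  simp only [Set.mem_union, Set.mem_setOf_eq, Set.mem_singleton_iff, P1, mk, List.mem_singleton,
    List.mem_cons, List.not_mem_nil, or_false]

end Aux

theorem stmt18 :
    ∃ samp1 samp2 : Fin 3 → Set (Fin 3 × Fin 3),
      (∀ i, samp1 i ∈ Posets (Fin 3)) ∧ (∀ i, samp2 i ∈ Posets (Fin 3)) ∧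
      (∀ e : Fin 3 × Fin 3,
        (Finset.univ.filter fun i => e ∈ samp1 i).card =
          (Finset.univ.filter fun i => e ∈ samp2 i).card) ∧
      ufgDepth 3 samp1 ({z : Fin 3 × Fin 3 | z.1 = z.2} ∪ {((0 : Fin 3), (1 : Fin 3))}) = 1 / 2 ∧
      ufgDepth 3 samp2 ({z : Fin 3 × Fin 3 | z.1 = z.2} ∪ {((0 : Fin 3), (1 : Fin 3))}) = 7 / 10 := by
  refine ⟨Aux.samp1, Aux.samp2, ?_, ?_, ?_, ?_, ?_⟩
  · intro i
    fin_cases i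
    · exact Aux.isPO_P1
    · exact Aux.isPO_P2
    · exact Aux.isPO_P3
  · intro i
    fin_cases i
    · exact Aux.isPO_P1
    · exact Aux.isPO_Q2
    · exact Aux.isPO_Q3
  · intro e
    rw [Finset.card_filter, Finset.card_filter, Fin.sum_univ_three, Fin.sum_univ_three]
    fin_cases e <;>
      simp [Aux.samp1, Aux.samp2, Aux.P1, Aux.P2, Aux.P3, Aux.Q2, Aux.Q3, Aux.mem_mk,
        Prod.mk.injEq]
  · rw [Aux.p_eq_P1]
    exact Aux.depth1
  · rw [Aux.p_eq_P1]
    exact Aux.depth2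
end
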